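/- arXiv:2110.10683 — 8 statements merged into one kernel-verified Lean document; each statement's English description precedes it below -/
import Mathlib

section
/- Let K be a non-archimedean local field, and let V and W be topological K-vector spaces whose topologies are metrizable and complete. Let f : V → W be a continuous, open, surjective K-linear map. Then every compact subset H of W is the image under f of some compact subset of V; that is, there exists a compact set Q ⊆ V with f(Q) = H. -/
/-- A non-archimedean local field: a field equipped with a (nontrivial) norm which is
ultrametric, with respect to which it is complete, whose norm takes values in a discrete
set `q ^ ℤ` on nonzero elements (so the valuation is discrete), and whose residue field
(the unit ball modulo the open unit ball) is finite. -/
def IsNonarchLocalField (K : Type*) [NontriviallyNormedField K] : Prop :=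
  (∀ x y : K, ‖x + y‖ ≤ max ‖x‖ ‖y‖) ∧
  CompleteSpace K ∧
  (∃ q : ℝ, 1 < q ∧ ∀ x : K, x ≠ 0 → ∃ n : ℤ, ‖x‖ = q ^ n) ∧
  (∃ R : Finset K, ∀ x : K, ‖x‖ ≤ 1 → ∃ r ∈ R, ‖x - r‖ < 1)

/-!
Fix a basis `U n` of zero-neighbourhoods in `V` with `U (n + 1) + U (n + 1) ⊆ U n`; since `f` is
open, there are closed zero-neighbourhoods `G n ⊆ f '' U (n + 1)`. Compactness of `H` yields
finite sets `T n ⊆ V` such that every `k ∈ H` is approximated as `k - f t ∈ G n` with `t ∈ T n`,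
and every such approximation is refined at level `n + 1` by a step in `U (n + 1)`. Following the
refinements from `k` gives a Cauchy sequence whose limit lifts `k` and lies in
`T n + closure (U n)` for every `n`. So `f ⁻¹' H ∩ ⋂ n, (T n + closure (U n))`, closed and
totally bounded in the complete space `V`, is a compact set mapping onto `H`.
-/

open Filter Set Topology Pointwise Uniformity

theorem exists_seq_of_exists_succ {α : Type*} {P : ℕ → α → Prop} {R : ℕ → α → α → Prop}
    (h0 : ∃ a, P 0 a) (hsucc : ∀ n a, P n a → ∃ b, P (n + 1) b ∧ R n a b) :
    ∃ x : ℕ → α, ∀ n, P n (x n) ∧ R n (x n) (x (n + 1)) := by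
  choose! next hnext using hsucc
  obtain ⟨a, ha⟩ := h0
  let x : ℕ → α := fun n => Nat.rec a (fun n b => next n b) n
  have hP : ∀ n, P n (x n) := fun n => by
    induction n with
    | zero => exact ha
    | succ n ih => exact (hnext n _ ih).1
  exact ⟨x, fun n => ⟨hP n, (hnext n _ (hP n)).2⟩⟩

theorem IsCompact.sub {G : Type*} [TopologicalSpace G] [AddGroup G] [IsTopologicalAddGroup G]
    {s t : Set G} (hs : IsCompact s) (ht : IsCompact t) : IsCompact (s - t) := by
  rw [← image2_sub, ← image_prod]
  exact (hs.prod ht).image continuous_sub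

theorem exists_finite_subset_forall_sub_mem {V W : Type*} [AddGroup W] [TopologicalSpace W]
    [IsTopologicalAddGroup W] (f : V → W) {C : Set W} (hC : IsCompact C) {A : Set V}
    (hCA : C ⊆ f '' A) {N : Set W} (hN : N ∈ 𝓝 0) :
    ∃ S ⊆ A, S.Finite ∧ ∀ c ∈ C, ∃ s ∈ S, c - f s ∈ N := by
  have hnhds : ∀ c, (· - c) ⁻¹' N ∈ 𝓝 c := fun c =>
    (continuous_sub_right c).continuousAt.preimage_mem_nhds (by rwa [sub_self])
  obtain ⟨F, hFC, hCF⟩ := hC.elim_nhds_subcover _ fun c _ => hnhds c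
  have hF : ∃ F' ⊆ f '' A, F'.Finite ∧ ∀ c ∈ C, ∃ y ∈ F', c - y ∈ N :=
    ⟨F, fun c hc => hCA (hFC c hc), F.finite_toSet, fun c hc => by simpa using hCF hc⟩
  simpa only [exists_subset_image_finite_and, exists_mem_image] using hF

theorem sub_mem_of_forall_sub_succ_mem {V : Type*} [AddGroup V] [TopologicalSpace V]
    {U : ℕ → Set V} (hU : (𝓝 0).HasAntitoneBasis U) (hUadd : ∀ n, U (n + 1) + U (n + 1) ⊆ U n)
    {t : ℕ → V} (ht : ∀ n, t (n + 1) - t n ∈ U (n + 1)) {m n : ℕ} (hnm : n ≤ m) :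
    t m - t n ∈ U n := by
  induction hnm using Nat.decreasingInduction with
  | self => simpa using mem_of_mem_nhds (hU.mem m)
  | of_succ k _ ih => simpa using hUadd k (add_mem_add ih (ht k))

section UniformAddGroup

variable {V : Type*} [AddCommGroup V] [UniformSpace V] [IsUniformAddGroup V]

theorem totallyBounded_of_forall_subset_finite_add_closure {ι : Sort*} {p : ι → Prop}
    {U : ι → Set V} (hU : (𝓝 0).HasBasis p U) {s : Set V}
    (hs : ∀ i, p i → ∃ T : Set V, T.Finite ∧ s ⊆ T + closure (U i)) : TotallyBounded s := by
  rw [totallyBounded_iff_subset_finite_iUnion_nhds_zero]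
  intro N hN
  obtain ⟨N', hN', hN'c, hN'N⟩ := exists_mem_nhds_isClosed_subset hN
  obtain ⟨i, hi, hUN'⟩ := hU.mem_iff.1 hN'
  obtain ⟨T, hT, hsT⟩ := hs i hi
  refine ⟨T, hT, hsT.trans ?_⟩
  rw [iUnion_vadd_set, vadd_eq_add]
  exact add_subset_add_left ((closure_minimal hUN' hN'c).trans hN'N)

theorem exists_tendsto_of_forall_sub_succ_mem [CompleteSpace V] {U : ℕ → Set V}
    (hU : (𝓝 0).HasAntitoneBasis U) (hUadd : ∀ n, U (n + 1) + U (n + 1) ⊆ U n) {t : ℕ → V}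
    (ht : ∀ n, t (n + 1) - t n ∈ U (n + 1)) :
    ∃ q, Tendsto t atTop (𝓝 q) ∧ ∀ n, q - t n ∈ closure (U n) := by
  have hbasis : (𝓤 V).HasBasis (fun _ => True) fun N => {p : V × V | p.1 - p.2 ∈ U N} := by
    rw [uniformity_eq_comap_nhds_zero_swapped]
    exact hU.toHasBasis.comap _
  have hcauchy : CauchySeq t := hbasis.cauchySeq_iff'.2 fun N _ =>
    ⟨N, fun n hn => sub_mem_of_forall_sub_succ_mem hU hUadd ht hn⟩
  obtain ⟨q, hq⟩ := cauchySeq_tendsto_of_complete hcauchy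
  refine ⟨q, hq, fun n => mem_closure_of_tendsto (hq.sub_const (t n)) ?_⟩
  filter_upwards [eventually_ge_atTop n] with m hm
  exact sub_mem_of_forall_sub_succ_mem hU hUadd ht hm

end UniformAddGroup

namespace AddMonoidHom

variable {V W : Type*} [AddCommGroup V] [AddCommGroup W] [TopologicalSpace W]
  [IsTopologicalAddGroup W]

theorem exists_finite_refinement (f : V →+ W) {H : Set W} (hH : IsCompact H)
    {G G' : Set W} (hG : IsClosed G) (hG' : G' ∈ 𝓝 0) {A : Set V} (hGA : G ⊆ f '' A)
    {T : Set V} (hT : T.Finite) :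
    ∃ T' : Set V, T'.Finite ∧
      ∀ k ∈ H, ∀ t ∈ T, k - f t ∈ G → ∃ t' ∈ T', t' - t ∈ A ∧ k - f t' ∈ G' := by
  have hC : IsCompact ((H - f '' T) ∩ G) := (hH.sub (hT.image f).isCompact).inter_right hG
  obtain ⟨S, hSA, hS, hCS⟩ :=
    exists_finite_subset_forall_sub_mem f hC (inter_subset_right.trans hGA) hG'
  refine ⟨T + S, hT.add hS, fun k hk t ht hkt => ?_⟩
  obtain ⟨s, hs, hks⟩ := hCS (k - f t) ⟨sub_mem_sub hk (mem_image_of_mem f ht), hkt⟩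
  refine ⟨t + s, add_mem_add ht hs, by simpa using hSA hs, ?_⟩
  rwa [map_add, ← sub_sub]

theorem exists_finite_approximations (f : V →+ W) (hsurj : Function.Surjective f)
    {H : Set W} (hH : IsCompact H) {G : ℕ → Set W} (hG0 : ∀ n, G n ∈ 𝓝 0)
    (hGc : ∀ n, IsClosed (G n)) {A : ℕ → Set V} (hGA : ∀ n, G n ⊆ f '' A n) :
    ∃ T : ℕ → Set V, ∀ n, ((T n).Finite ∧ ∀ k ∈ H, ∃ t ∈ T n, k - f t ∈ G n) ∧
      ∀ k ∈ H, ∀ t ∈ T n, k - f t ∈ G n →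
        ∃ t' ∈ T (n + 1), t' - t ∈ A n ∧ k - f t' ∈ G (n + 1) := by
  refine exists_seq_of_exists_succ
    (P := fun n (T : Set V) => T.Finite ∧ ∀ k ∈ H, ∃ t ∈ T, k - f t ∈ G n)
    (R := fun n T T' => ∀ k ∈ H, ∀ t ∈ T, k - f t ∈ G n →
      ∃ t' ∈ T', t' - t ∈ A n ∧ k - f t' ∈ G (n + 1)) ?_ fun n T ⟨hT, hHT⟩ => ?_
  · obtain ⟨T, -, hT, hHT⟩ := exists_finite_subset_forall_sub_mem f hH
      (by rw [image_univ, hsurj.range_eq]; exact subset_univ H) (hG0 0)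
    exact ⟨T, hT, hHT⟩
  · obtain ⟨T', hT', hTT'⟩ := f.exists_finite_refinement hH (hGc n) (hG0 (n + 1)) (hGA n) hT
    refine ⟨T', ⟨hT', fun k hk => ?_⟩, hTT'⟩
    obtain ⟨t, ht, hkt⟩ := hHT k hk
    obtain ⟨t', ht', -, hkt'⟩ := hTT' k hk t ht hkt
    exact ⟨t', ht', hkt'⟩

section Complete

variable [UniformSpace V] [IsUniformAddGroup V] [CompleteSpace V]

theorem exists_lift_mem_add_closure [T2Space W] (f : V →+ W) (hcont : Continuous f)
    {U : ℕ → Set V} (hU : (𝓝 0).HasAntitoneBasis U) (hUadd : ∀ n, U (n + 1) + U (n + 1) ⊆ U n)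
    {G : ℕ → Set W} (hGU : ∀ n, G n ⊆ f '' U (n + 1)) {T : ℕ → Set V} {k : W}
    (hk0 : ∃ t ∈ T 0, k - f t ∈ G 0)
    (hk : ∀ n, ∀ t ∈ T n, k - f t ∈ G n →
      ∃ t' ∈ T (n + 1), t' - t ∈ U (n + 1) ∧ k - f t' ∈ G (n + 1)) :
    ∃ q, f q = k ∧ ∀ n, q ∈ T n + closure (U n) := by
  obtain ⟨x, hx⟩ := exists_seq_of_exists_succ
    (P := fun n x => x ∈ T n ∧ k - f x ∈ G n) (R := fun n x y => y - x ∈ U (n + 1)) hk0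
    fun n x ⟨hxT, hkx⟩ => by
      obtain ⟨y, hyT, hyx, hky⟩ := hk n x hxT hkx
      exact ⟨y, ⟨hyT, hky⟩, hyx⟩
  obtain ⟨q, hxq, hq⟩ := exists_tendsto_of_forall_sub_succ_mem hU hUadd fun n => (hx n).2
  refine ⟨q, ?_, fun n => ⟨x n, (hx n).1.1, q - x n, hq n, add_sub_cancel _ _⟩⟩
  have hsmall : Tendsto (fun n => k - f (x n)) atTop (𝓝 0) :=
    ((hU.map f).tendsto fun n => image_mono (hU.antitone n.le_succ) (hGU n (hx n).1.2))
      |>.mono_right (hcont.tendsto' 0 0 f.map_zero)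
  refine tendsto_nhds_unique ((hcont.tendsto q).comp hxq) ?_
  simpa [Function.comp_def] using (tendsto_const_nhds (x := k)).sub hsmall

theorem exists_isCompact_image_eq [FirstCountableTopology V] [T2Space W]
    (f : V →+ W) (hcont : Continuous f) (hopen : IsOpenMap f) (hsurj : Function.Surjective f)
    {H : Set W} (hH : IsCompact H) : ∃ Q : Set V, IsCompact Q ∧ f '' Q = H := by
  obtain ⟨U, hU, hUadd⟩ := IsTopologicalAddGroup.exists_antitone_basis_nhds_zero V
  have hG : ∀ n, ∃ G ∈ 𝓝 (0 : W), IsClosed G ∧ G ⊆ f '' U (n + 1) := fun n =>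
    exists_mem_nhds_isClosed_subset (by simpa using hopen.image_mem_nhds (hU.mem (n + 1)))
  choose G hG0 hGc hGU using hG
  obtain ⟨T, hT⟩ := f.exists_finite_approximations hsurj hH hG0 hGc hGU
  refine ⟨f ⁻¹' H ∩ ⋂ n, (T n + closure (U n)), ?_, ?_⟩
  · refine TotallyBounded.isCompact_of_isClosed ?_ ?_
    · exact totallyBounded_of_forall_subset_finite_add_closure hU.toHasBasis fun n _ =>
        ⟨T n, (hT n).1.1, inter_subset_right.trans (iInter_subset _ n)⟩
    · exact (hH.isClosed.preimage hcont).inter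
        (isClosed_iInter fun n => isClosed_closure.add_left_of_isCompact (hT n).1.1.isCompact)
  · refine (image_subset_iff.2 inter_subset_left).antisymm fun k hk => ?_
    obtain ⟨q, hqk, hq⟩ := f.exists_lift_mem_add_closure hcont hU hUadd hGU ((hT 0).1.2 k hk)
      fun n => (hT n).2 k hk
    exact ⟨q, ⟨by rwa [mem_preimage, hqk], mem_iInter.2 hq⟩, hqk⟩

end Complete

end AddMonoidHom

theorem compact_image_of_isOpenMap_of_surjective_general
    (K : Type*) [NontriviallyNormedField K]
    (V W : Type*)
    [AddCommGroup V] [Module K V] [UniformSpace V] [IsUniformAddGroup V]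
    [CompleteSpace V] [TopologicalSpace.MetrizableSpace V]
    [AddCommGroup W] [Module K W] [UniformSpace W] [IsUniformAddGroup W]
    [TopologicalSpace.MetrizableSpace W]
    (f : V →ₗ[K] W) (hcont : Continuous f) (hopen : IsOpenMap f)
    (hsurj : Function.Surjective f)
    (H : Set W) (hH : IsCompact H) :
    ∃ Q : Set V, IsCompact Q ∧ f '' Q = H :=
  f.toAddMonoidHom.exists_isCompact_image_eq hcont hopen hsurj hH

/-- Every compact subset of the target of a continuous, open, surjective linear map between
complete metrizable topological vector spaces over a non-archimedean local field is the
image of a compact subset of the source. -/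
theorem compact_image_of_isOpenMap_of_surjective
    (K : Type*) [NontriviallyNormedField K] (hK : IsNonarchLocalField K)
    (V W : Type*)
    [AddCommGroup V] [Module K V] [UniformSpace V] [IsUniformAddGroup V]
    [ContinuousSMul K V] [CompleteSpace V] [TopologicalSpace.MetrizableSpace V]
    [AddCommGroup W] [Module K W] [UniformSpace W] [IsUniformAddGroup W]
    [ContinuousSMul K W] [CompleteSpace W] [TopologicalSpace.MetrizableSpace W]
    (f : V →ₗ[K] W) (hcont : Continuous f) (hopen : IsOpenMap f)
    (hsurj : Function.Surjective f)
    (H : Set W) (hH : IsCompact H) :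
    ∃ Q : Set V, IsCompact Q ∧ f '' Q = H :=
  compact_image_of_isOpenMap_of_surjective_general K V W f hcont hopen hsurj H hH
end

section
/- Let K be a non-archimedean local field, let V and W be topological K-vector spaces whose topologies are metrizable and complete, and let f : V → W be a continuous, open, surjective K-linear map. Let S be an extremally disconnected compact Hausdorff topological space. Then for every continuous map ψ : S → W there exists a continuous map ψ̃ : S → V with f ∘ ψ̃ = ψ. In particular, the map C⁰(S, V) → C⁰(S, W) given by post-composition with f is surjective. -/
open Filter Set Topology Uniformity Pointwise

theorem ContinuousMap.exists_lift_approx {S V W : Type*} [TopologicalSpace S] [CompactSpace S]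
    [T2Space S] [TotallyDisconnectedSpace S] [TopologicalSpace V] [UniformSpace W]
    (f : V → W) {M : Set V} (g : C(S, W)) (hgM : ∀ s, g s ∈ f '' M) {r : SetRel W W}
    (hr : r ∈ 𝓤 W) : ∃ h : C(S, V), (∀ s, h s ∈ M) ∧ ∀ s, (g s, f (h s)) ∈ r := by
  obtain ⟨t, ht, t_symm, htr⟩ := comp_symm_mem_uniformity_sets hr
  obtain ⟨n, c, a, hc, hca⟩ :=
    g.exists_finite_approximation_of_mem_nhds_diagonal (nhdsSet_diagonal_le_uniformity ht)
  choose lift hliftM hlift using hgM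
  -- Lift `g` at one chosen point of each fibre of `c`; on a fibre, `g` varies within `t ○ t`.
  let lift' : range c → V := fun i => lift (rangeSplitting c i)
  refine ⟨⟨lift' ∘ rangeFactorization c, continuous_of_discreteTopology.comp hc.rangeFactorization⟩,
    fun s => hliftM _, fun s => ?_⟩
  have hrep : c (rangeSplitting c (rangeFactorization c s)) = c s := apply_rangeSplitting c _
  simp only [ContinuousMap.coe_mk, Function.comp_apply, lift', hlift]
  exact htr ⟨a (c s), hca s, t_symm.symm _ _ (hrep ▸ hca _)⟩

theorem sub_mem_of_forall_succ_sub_mem {G : Type*} [AddGroup G] {U : ℕ → Set G}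
    (hU : ∀ n, U (n + 1) + U (n + 1) ⊆ U n) (hU₀ : ∀ n, (0 : G) ∈ U n) {x : ℕ → G}
    (hx : ∀ n, x (n + 1) - x n ∈ U (n + 1)) {n m : ℕ} (hnm : n ≤ m) : x m - x n ∈ U n := by
  obtain ⟨d, rfl⟩ := Nat.exists_eq_add_of_le hnm
  induction d generalizing n with
  | zero => simpa using hU₀ n
  | succ d ih =>
    rw [← add_assoc, add_right_comm, ← sub_add_sub_cancel _ (x (n + 1))]
    exact hU n (add_mem_add (ih (Nat.le_add_right _ _)) (hx n))

theorem ContinuousMap.cauchySeq_of_forall_sub_mem {S V : Type*} [TopologicalSpace S]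
    [CompactSpace S] [AddGroup V] [UniformSpace V] [IsUniformAddGroup V] {U : ℕ → Set V}
    (hU : (𝓝 0).HasBasis (fun _ => True) U) {φ : ℕ → C(S, V)}
    (hφ : ∀ n m, n ≤ m → ∀ s, φ m s - φ n s ∈ U n) : CauchySeq φ := by
  have hb : (𝓤 V).HasBasis (fun _ => True) fun n => {p | p.1 - p.2 ∈ U n} := by
    rw [uniformity_eq_comap_nhds_zero_swapped]
    exact hU.comap _
  exact hb.compactConvergenceUniformity_of_compact.cauchySeq_iff'.2
    fun n _ => ⟨n, fun m hm s => hφ n m hm s⟩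

theorem ContinuousMap.exists_sub_mem_image_of_isOpenMap {S V W F : Type*} [TopologicalSpace S]
    [CompactSpace S] [T2Space S] [TotallyDisconnectedSpace S] [AddGroup V] [TopologicalSpace V]
    [AddGroup W] [UniformSpace W] [IsUniformAddGroup W] [FunLike F V W] [AddMonoidHomClass F V W]
    (f : F) (hopen : IsOpenMap f) {U : Set V} (hU : U ∈ 𝓝 0) {M : Set V} (g : C(S, W))
    (hgM : ∀ s, g s ∈ f '' M) : ∃ h : C(S, V), (∀ s, h s ∈ M) ∧ ∀ s, g s - f (h s) ∈ f '' U := by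
  have hfU : f '' U ∈ 𝓝 0 := by simpa using hopen.image_mem_nhds hU
  have hr : {p : W × W | p.1 - p.2 ∈ f '' U} ∈ 𝓤 W := by
    rw [uniformity_eq_comap_nhds_zero_swapped]
    exact preimage_mem_comap hfU
  exact g.exists_lift_approx f hgM hr

theorem ContinuousMap.exists_seq_approx_lift_of_isOpenMap {S V W F : Type*} [TopologicalSpace S]
    [CompactSpace S] [T2Space S] [TotallyDisconnectedSpace S]
    [AddGroup V] [TopologicalSpace V] [ContinuousAdd V] [AddGroup W] [UniformSpace W]
    [IsUniformAddGroup W] [FunLike F V W] [AddMonoidHomClass F V W]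
    (f : F) (hcont : Continuous f) (hopen : IsOpenMap f) (hsurj : Function.Surjective f)
    {u : ℕ → Set V} (hu : ∀ n, u n ∈ 𝓝 0) (ψ : C(S, W)) :
    ∃ φ : ℕ → C(S, V), ∀ n s,
      ψ s - f (φ n s) ∈ f '' u (n + 1) ∧ φ (n + 1) s - φ n s ∈ u (n + 1) := by
  obtain ⟨φ₀, -, hφ₀⟩ := ψ.exists_sub_mem_image_of_isOpenMap f hopen (hu 1) (M := univ)
    (by simp [hsurj.range_eq])
  have step : ∀ n (φ : C(S, V)), (∀ s, ψ s - f (φ s) ∈ f '' u (n + 1)) →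
      ∃ φ' : C(S, V), (∀ s, φ' s - φ s ∈ u (n + 1)) ∧ ∀ s, ψ s - f (φ' s) ∈ f '' u (n + 2) := by
    intro n φ hφ
    obtain ⟨h, hhu, hh⟩ := (ψ - (⟨f, hcont⟩ : C(V, W)).comp φ).exists_sub_mem_image_of_isOpenMap
      f hopen (hu (n + 2)) hφ
    refine ⟨h + φ, fun s => by simpa using hhu s, fun s => ?_⟩
    simpa [sub_add_eq_sub_sub_swap] using hh s
  choose! next hnext_sub hnext_err using step
  let φ : ℕ → C(S, V) := fun n => Nat.rec φ₀ next n
  have hφ_err : ∀ n s, ψ s - f (φ n s) ∈ f '' u (n + 1) := by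
    intro n
    induction n with
    | zero => exact hφ₀
    | succ n ih => exact hnext_err n (φ n) ih
  exact ⟨φ, fun n s => ⟨hφ_err n s, hnext_sub n (φ n) (hφ_err n) s⟩⟩

theorem ContinuousMap.exists_lift_of_isOpenMap {S V W F : Type*} [TopologicalSpace S]
    [CompactSpace S] [T2Space S] [TotallyDisconnectedSpace S]
    [AddGroup V] [UniformSpace V] [IsUniformAddGroup V] [CompleteSpace V] [FirstCountableTopology V]
    [AddGroup W] [UniformSpace W] [IsUniformAddGroup W] [T2Space W]
    [FunLike F V W] [AddMonoidHomClass F V W] (f : F) (hcont : Continuous f) (hopen : IsOpenMap f)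
    (hsurj : Function.Surjective f) (ψ : C(S, W)) : ∃ φ : C(S, V), ∀ s, f (φ s) = ψ s := by
  obtain ⟨u, hu, hu_add⟩ := IsTopologicalAddGroup.exists_antitone_basis_nhds_zero V
  obtain ⟨φ, hφ⟩ := ψ.exists_seq_approx_lift_of_isOpenMap f hcont hopen hsurj hu.mem
  have hφ_sub : ∀ n m, n ≤ m → ∀ s, φ m s - φ n s ∈ u n := fun n m hnm s =>
    sub_mem_of_forall_succ_sub_mem (x := fun k => φ k s) hu_add
      (fun n => mem_of_mem_nhds (hu.mem n)) (fun k => (hφ k s).2) hnm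
  obtain ⟨φ_lim, hφ_lim⟩ := cauchySeq_tendsto_of_complete
    (ContinuousMap.cauchySeq_of_forall_sub_mem hu.toHasBasis hφ_sub)
  refine ⟨φ_lim, fun s => tendsto_nhds_unique
    ((hcont.tendsto _).comp ((continuous_eval_const s).tendsto _ |>.comp hφ_lim)) ?_⟩
  have herr : Tendsto (fun n => ψ s - f (φ n s)) atTop (𝓝 0) := by
    choose v hvu hv using fun n => (hφ n s).1
    have hv₀ : Tendsto v atTop (𝓝 0) := hu.tendsto fun n => hu.antitone n.le_succ (hvu n)
    simpa only [Function.comp_def, hv] using (hcont.tendsto' 0 0 (map_zero f)).comp hv₀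
  simpa [Function.comp_def] using herr.neg.add (tendsto_const_nhds (x := ψ s))

theorem continuousMap_lift_of_isOpenMap_of_surjective_general
    (K : Type*) [NontriviallyNormedField K]
    (V W : Type*)
    [AddCommGroup V] [Module K V] [UniformSpace V] [IsUniformAddGroup V]
    [CompleteSpace V] [TopologicalSpace.MetrizableSpace V]
    [AddCommGroup W] [Module K W] [UniformSpace W] [IsUniformAddGroup W]
    [TopologicalSpace.MetrizableSpace W]
    (f : V →ₗ[K] W) (hcont : Continuous f) (hopen : IsOpenMap f)
    (hsurj : Function.Surjective f)
    (S : Type*) [TopologicalSpace S] [CompactSpace S] [T2Space S]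
    [ExtremallyDisconnected S] :
    (∀ ψ : C(S, W), ∃ ψlift : C(S, V), ∀ s : S, f (ψlift s) = ψ s) ∧
    Function.Surjective
      (fun φ : C(S, V) => (ContinuousMap.mk (⇑f) hcont).comp φ) := by
  have lift := ContinuousMap.exists_lift_of_isOpenMap (S := S) f hcont hopen hsurj
  exact ⟨lift, fun ψ => (lift ψ).imp fun _ hφ => ContinuousMap.ext hφ⟩

/-- Continuous maps from an extremally disconnected compact Hausdorff space to the target of
a continuous, open, surjective linear map between complete metrizable topological vector
spaces over a non-archimedean local field lift along the map; in particular the induced map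
`C⁰(S, V) → C⁰(S, W)` is surjective. -/
theorem continuousMap_lift_of_isOpenMap_of_surjective
    (K : Type*) [NontriviallyNormedField K] (hK : IsNonarchLocalField K)
    (V W : Type*)
    [AddCommGroup V] [Module K V] [UniformSpace V] [IsUniformAddGroup V]
    [ContinuousSMul K V] [CompleteSpace V] [TopologicalSpace.MetrizableSpace V]
    [AddCommGroup W] [Module K W] [UniformSpace W] [IsUniformAddGroup W]
    [ContinuousSMul K W] [CompleteSpace W] [TopologicalSpace.MetrizableSpace W]
    (f : V →ₗ[K] W) (hcont : Continuous f) (hopen : IsOpenMap f)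
    (hsurj : Function.Surjective f)
    (S : Type*) [TopologicalSpace S] [CompactSpace S] [T2Space S]
    [ExtremallyDisconnected S] :
    (∀ ψ : C(S, W), ∃ ψlift : C(S, V), ∀ s : S, f (ψlift s) = ψ s) ∧
    Function.Surjective
      (fun φ : C(S, V) => (ContinuousMap.mk (⇑f) hcont).comp φ) :=
  continuousMap_lift_of_isOpenMap_of_surjective_general K V W f hcont hopen hsurj S
end

section
/- Let K be a non-archimedean local field. Let (Vⁿ, dⁿ)_{n ∈ ℤ} be a cochain complex of K-Fréchet spaces (complete metrizable topological K-vector spaces) with continuous K-linear differentials dⁿ : Vⁿ → V^{n+1}, d^{n+1} ∘ dⁿ = 0, which is exact as a complex of K-vector spaces (ker dⁿ = range d^{n-1} for all n). Then for every extremally disconnected compact Hausdorff topological space S, the cochain complex (C⁰(S, Vⁿ))_{n ∈ ℤ}, with differentials given by post-composition with dⁿ, is exact. -/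
/-!
By Baire's theorem a surjective linear map `f : E → F` onto a complete metrizable space is almost
open: the closure of the image of a neighbourhood of `0` is a neighbourhood of `0`. Over a profinite
set `S`, pointwise approximate preimages can be glued along a finite clopen partition, so every
continuous `g : S → F` has a continuous approximate lift with error in any prescribed neighbourhood
of `0`. Correcting the error repeatedly along a neighbourhood basis of `0` in `E`, as in the
proof of the open mapping theorem, gives lifts converging uniformly to an exact continuous lift.
Applied to `dⁿ : Vⁿ → ker dⁿ⁺¹` this is the exactness of `C⁰(S, V•)` at `C⁰(S, Vⁿ⁺¹)`.
-/

open Set Filter Topology TopologicalSpace Pointwise Uniformity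

theorem exists_continuousMap_forall_of_forall_eventually {S X : Type*} [TopologicalSpace S]
    [CompactSpace S] [T2Space S] [TotallyDisconnectedSpace S] [TopologicalSpace X]
    {P : S → X → Prop} (h : ∀ s, ∃ x, ∀ᶠ t in 𝓝 s, P t x) :
    ∃ v : C(S, X), ∀ t, P t (v t) := by
  choose x hx using h
  have hU : IsOpenCover fun s ↦ (⟨interior {t | P t (x s)}, isOpen_interior⟩ : Opens S) :=
    .of_sets (fun _ ↦ isOpen_interior) <|
      eq_univ_of_forall fun s ↦ mem_iUnion.2 ⟨s, mem_interior_iff_mem_nhds.2 (hx s)⟩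
  obtain ⟨n, W, hW, hcover, hdisj⟩ := hU.exists_finite_nonempty_disjoint_clopen_cover
  choose i hi using fun k ↦ (hW k).2
  have hunique (t : S) : ∃! k, t ∈ W k := by
    obtain ⟨k, hk⟩ := mem_iUnion.1 (hcover (mem_univ t))
    refine ⟨k, hk, fun l hl ↦ hdisj.eq ?_⟩
    simpa [← Clopens.coe_disjoint, not_disjoint_iff] using ⟨t, hl, hk⟩
  choose j hj hj' using hunique
  have hjcont : Continuous j := continuous_discrete_rng.2 fun k ↦ by
    convert (W k).isOpen
    exact Set.ext fun t ↦ ⟨fun htk ↦ htk ▸ hj t, fun ht ↦ (hj' _ _ ht).symm⟩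
  exact ⟨⟨fun t ↦ x (i (j t)), (continuous_of_discreteTopology (f := x ∘ i)).comp hjcont⟩,
    fun t ↦ interior_subset (s := {t' | P t' (x (i (j t)))}) (hi _ (hj t))⟩

theorem exists_continuousMap_sub_mem_of_mem_closure_image {S E F : Type*} [TopologicalSpace S]
    [CompactSpace S] [T2Space S] [TotallyDisconnectedSpace S] [TopologicalSpace E]
    [AddCommGroup F] [TopologicalSpace F] [IsTopologicalAddGroup F] (f : E → F) {U : Set E}
    {W : Set F} (hW : W ∈ 𝓝 0) (e : C(S, F)) (he : ∀ s, e s ∈ closure (f '' U)) :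
    ∃ v : C(S, E), ∀ s, v s ∈ U ∧ e s - f (v s) ∈ W := by
  obtain ⟨W', hW', hW'W⟩ := exists_nhds_zero_half hW
  refine exists_continuousMap_forall_of_forall_eventually
    (P := fun t x ↦ x ∈ U ∧ e t - f x ∈ W) fun s ↦ ?_
  have hnear : ∀ᶠ y in 𝓝 (e s), e s - y ∈ W' :=
    ((continuous_const.sub continuous_id).tendsto' (e s) 0 (sub_self _)).eventually_mem hW'
  obtain ⟨_, ⟨x, hxU, rfl⟩, hx⟩ :=
    ((mem_closure_iff_frequently.1 (he s)).and_eventually hnear).exists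
  have hcont : ∀ᶠ t in 𝓝 s, e t - e s ∈ W' :=
    ((e.continuous.sub continuous_const).tendsto' s 0 (sub_self _)).eventually_mem hW'
  refine ⟨x, ?_⟩
  filter_upwards [hcont] with t ht
  exact ⟨hxU, by simpa using hW'W _ ht _ hx⟩

theorem exists_hasAntitoneBasis_nhds_zero_add_subset (G : Type*) [AddGroup G] [TopologicalSpace G]
    [IsTopologicalAddGroup G] [(𝓝 (0 : G)).IsCountablyGenerated] :
    ∃ U : ℕ → Set G, (𝓝 0).HasAntitoneBasis U ∧ (∀ k, IsClosed (U k)) ∧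
      ∀ k, U (k + 1) + U (k + 1) ⊆ U k := by
  obtain ⟨B, hB⟩ := (𝓝 (0 : G)).exists_antitone_basis
  have hhalves : ∀ N ∈ 𝓝 (0 : G), ∃ V ∈ 𝓝 (0 : G), IsClosed V ∧ V + V ⊆ N := fun N hN ↦
    let ⟨V, hV, hVc, _, hVN⟩ := exists_closed_nhds_zero_neg_eq_add_subset hN; ⟨V, hV, hVc, hVN⟩
  choose! half hhalf hclosed hsub using hhalves
  have hsubset {V : Set G} (hV : V ∈ 𝓝 0) {W : Set G} (hVW : V + V ⊆ W) : V ⊆ W :=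
    (subset_add_left _ (mem_of_mem_nhds hV)).trans hVW
  let N : ℕ → Set G := fun k ↦ Nat.rec (B 0) (fun k Nk ↦ half Nk ∩ B (k + 1)) k
  have hN (k : ℕ) : N k ∈ 𝓝 0 ∧ N k ⊆ B k := by
    induction k with
    | zero => exact ⟨hB.mem 0, subset_rfl⟩
    | succ k ih => exact ⟨inter_mem (hhalf _ ih.1) (hB.mem _), inter_subset_right⟩
  have hU (k : ℕ) : half (N k) ∈ 𝓝 0 := hhalf _ (hN k).1
  have hUadd (k : ℕ) : half (N (k + 1)) + half (N (k + 1)) ⊆ half (N k) :=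
    (hsub _ (hN (k + 1)).1).trans inter_subset_left
  refine ⟨fun k ↦ half (N k), ⟨hB.1.to_hasBasis
    (fun k _ ↦ ⟨k, trivial, (hsubset (hU k) (hsub _ (hN k).1)).trans (hN k).2⟩)
    (fun k _ ↦ hB.1.mem_iff.1 (hU k)),
    antitone_nat_of_succ_le fun k ↦ hsubset (hU (k + 1)) (hUadd k)⟩,
    fun k ↦ hclosed _ (hN k).1, hUadd⟩

theorem sub_mem_of_le_of_forall_succ_sub_mem {G : Type*} [AddGroup G] {U : ℕ → Set G}
    (hU : ∀ k, U (k + 1) + U (k + 1) ⊆ U k) (hU0 : ∀ k, (0 : G) ∈ U k) {u : ℕ → G}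
    (hu : ∀ k, u (k + 1) - u k ∈ U (k + 1)) {m n : ℕ} (hmn : m ≤ n) : u n - u m ∈ U m := by
  obtain ⟨p, rfl⟩ := Nat.exists_eq_add_of_le hmn
  induction p generalizing m with
  | zero => simpa using hU0 m
  | succ p ih =>
    rw [← sub_add_sub_cancel _ (u (m + 1)), show m + (p + 1) = m + 1 + p by omega]
    exact hU m (add_mem_add (ih (Nat.le_add_right _ _)) (hu m))

theorem exists_tendstoUniformly_of_sub_mem {S E : Type*} [TopologicalSpace S] [AddCommGroup E]
    [UniformSpace E] [IsUniformAddGroup E] [CompleteSpace E] {U : ℕ → Set E}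
    (hU : (𝓝 0).HasAntitoneBasis U) (hUc : ∀ k, IsClosed (U k)) (u : ℕ → C(S, E))
    (hu : ∀ m n, m ≤ n → ∀ s, u n s - u m s ∈ U m) :
    ∃ φ : C(S, E), TendstoUniformly (fun k ↦ u k) φ atTop := by
  have hbasis := hU.1.uniformity_of_nhds_zero_swapped
  have hcauchy (s : S) : CauchySeq fun k ↦ u k s :=
    hbasis.cauchySeq_iff'.2 fun m _ ↦ ⟨m, fun n hn ↦ hu m n hn s⟩
  choose φ hφ using fun s ↦ cauchySeq_tendsto_of_complete (hcauchy s)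
  have hlim (m : ℕ) (s : S) : φ s - u m s ∈ U m :=
    (hUc m).mem_of_tendsto ((hφ s).sub_const _) (eventually_atTop.2 ⟨m, fun n hn ↦ hu m n hn s⟩)
  have hunif : TendstoUniformly (fun k ↦ u k) φ atTop := fun V hV ↦ by
    obtain ⟨i, -, hi⟩ := hbasis.mem_iff.1 hV
    filter_upwards [eventually_ge_atTop i] with m hm s using hi (hU.antitone hm (hlim m s))
  exact ⟨⟨φ, hunif.continuous (Frequently.of_forall fun k ↦ (u k).continuous)⟩, hunif⟩

theorem AddMonoidHom.exists_continuousMap_lift_of_closure_image_mem_nhds {S E F : Type*}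
    [TopologicalSpace S] [CompactSpace S] [T2Space S] [TotallyDisconnectedSpace S]
    [AddCommGroup E] [UniformSpace E] [IsUniformAddGroup E] [CompleteSpace E]
    [(𝓝 (0 : E)).IsCountablyGenerated]
    [AddCommGroup F] [TopologicalSpace F] [IsTopologicalAddGroup F] [T2Space F]
    (f : E →+ F) (hf : Continuous f) (hsurj : Function.Surjective f)
    (hopen : ∀ U ∈ 𝓝 (0 : E), closure (f '' U) ∈ 𝓝 0) (g : C(S, F)) :
    ∃ h : C(S, E), ∀ s, f (h s) = g s := by
  obtain ⟨U, hU, hUc, hUadd⟩ := exists_hasAntitoneBasis_nhds_zero_add_subset E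
  have step : ∀ k (u : C(S, E)), (∀ s, g s - f (u s) ∈ closure (f '' U k)) →
      ∃ v : C(S, E), ∀ s, v s ∈ U k ∧ g s - f ((u + v) s) ∈ closure (f '' U (k + 1)) := by
    intro k u hu
    obtain ⟨v, hv⟩ := exists_continuousMap_sub_mem_of_mem_closure_image f
      (hopen _ (hU.mem (k + 1))) (g - (⟨f, hf⟩ : C(E, F)).comp u) hu
    exact ⟨v, fun s ↦ by simpa [sub_add_eq_sub_sub] using hv s⟩
  obtain ⟨u₀, hu₀⟩ := exists_continuousMap_sub_mem_of_mem_closure_image f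
    (hopen _ (hU.mem 1)) g (U := univ)
    fun s ↦ subset_closure (image_univ_of_surjective hsurj ▸ mem_univ _)
  choose! next hnext using fun k ↦ step (k + 1)
  let u : ℕ → C(S, E) := fun k ↦ Nat.rec u₀ (fun k uk ↦ uk + next k uk) k
  have herr (k : ℕ) (s : S) : g s - f (u k s) ∈ closure (f '' U (k + 1)) := by
    induction k generalizing s with
    | zero => exact (hu₀ s).2
    | succ k ih => exact (hnext k (u k) ih s).2
  have hdiff (k : ℕ) (s : S) : u (k + 1) s - u k s ∈ U (k + 1) := by
    simpa [u] using (hnext k (u k) (herr k) s).1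
  obtain ⟨φ, hφ⟩ := exists_tendstoUniformly_of_sub_mem hU hUc u fun m n hmn s ↦
    sub_mem_of_le_of_forall_succ_sub_mem hUadd (fun k ↦ mem_of_mem_nhds (hU.mem k))
      (u := fun k ↦ u k s) (fun k ↦ hdiff k s) hmn
  refine ⟨φ, fun s ↦ tendsto_nhds_unique ((hf.tendsto _).comp (hφ.tendsto_at s)) ?_⟩
  have hsmall : Tendsto (fun k ↦ g s - f (u k s)) atTop (𝓝 0) := by
    refine (closed_nhds_basis 0).tendsto_right_iff.2 fun N ⟨hN, hNc⟩ ↦ ?_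
    filter_upwards [tendsto_smallSets_iff.1 hU.tendsto_smallSets _
      (hf.tendsto' 0 0 (map_zero f) hN)] with k hk
    exact closure_minimal (image_subset_iff.2 ((hU.antitone k.le_succ).trans hk)) hNc (herr k s)
  simpa [Function.comp_def] using (tendsto_const_nhds (x := g s)).sub hsmall

theorem LinearMap.closure_image_mem_nhds_zero_of_surjective {K E F : Type*}
    [NontriviallyNormedField K] [AddCommGroup E] [Module K E] [TopologicalSpace E]
    [IsTopologicalAddGroup E] [ContinuousSMul K E] [AddCommGroup F] [Module K F]
    [TopologicalSpace F] [IsTopologicalAddGroup F] [ContinuousConstSMul K F] [BaireSpace F]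
    (f : E →ₗ[K] F) (hf : Function.Surjective f) {U : Set E} (hU : U ∈ 𝓝 0) :
    closure (f '' U) ∈ 𝓝 0 := by
  obtain ⟨V, hV, -, hVneg, hVU⟩ := exists_closed_nhds_zero_neg_eq_add_subset hU
  obtain ⟨c, hc⟩ := NormedField.exists_one_lt_norm K
  have hc0 : c ≠ 0 := norm_pos_iff.1 (one_pos.trans hc)
  have hcover : ⋃ n : ℕ, closure (c ^ n • f '' V) = univ := by
    refine eq_univ_of_forall fun y ↦ ?_
    obtain ⟨x, rfl⟩ := hf y
    have hsmall : Tendsto (fun n : ℕ ↦ c⁻¹ ^ n • x) atTop (𝓝 0) := by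
      simpa using (tendsto_pow_atTop_nhds_zero_of_norm_lt_one (x := c⁻¹)
        (by simpa using inv_lt_one_of_one_lt₀ hc)).smul_const x
    obtain ⟨n, hn⟩ := (hsmall.eventually_mem hV).exists
    refine mem_iUnion.2 ⟨n, subset_closure ⟨f (c⁻¹ ^ n • x), mem_image_of_mem f hn, ?_⟩⟩
    simp [smul_smul, hc0]
  have : Nonempty F := ⟨0⟩
  obtain ⟨n, hn⟩ := nonempty_interior_of_iUnion_of_closed (fun _ ↦ isClosed_closure) hcover
  rw [closure_smul₀' (pow_ne_zero n hc0), interior_smul₀ (pow_ne_zero n hc0),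
    smul_set_nonempty] at hn
  obtain ⟨y, hy⟩ := hn
  have hVV : ∀ a ∈ f '' V, ∀ b ∈ f '' V, a - b ∈ f '' U := by
    rintro _ ⟨v, hv, rfl⟩ _ ⟨w, hw, rfl⟩
    refine ⟨v - w, hVU ?_, map_sub f v w⟩
    rw [sub_eq_add_neg]
    exact add_mem_add hv (hVneg ▸ neg_mem_neg.2 hw)
  have hsub : {z | y + z ∈ closure (f '' V)} ⊆ closure (f '' U) := fun z hz ↦ by
    simpa using map_mem_closure₂ continuous_sub hz (interior_subset hy) hVV
  exact mem_of_superset ((continuous_const_add y).tendsto' 0 y (add_zero y)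
    (mem_interior_iff_mem_nhds.1 hy)) hsub

theorem ContinuousLinearMap.exists_continuousMap_lift_of_surjective {K E F S : Type*}
    [NontriviallyNormedField K] [AddCommGroup E] [Module K E] [UniformSpace E]
    [IsUniformAddGroup E] [ContinuousSMul K E] [CompleteSpace E]
    [(𝓝 (0 : E)).IsCountablyGenerated] [AddCommGroup F] [Module K F] [TopologicalSpace F]
    [IsTopologicalAddGroup F] [ContinuousConstSMul K F] [BaireSpace F] [T2Space F]
    [TopologicalSpace S] [CompactSpace S] [T2Space S] [TotallyDisconnectedSpace S]
    (f : E →L[K] F) (hf : Function.Surjective f) (g : C(S, F)) :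
    ∃ h : C(S, E), ∀ s, f (h s) = g s :=
  (f : E →+ F).exists_continuousMap_lift_of_closure_image_mem_nhds f.continuous hf
    (fun _ hU ↦ (f : E →ₗ[K] F).closure_image_mem_nhds_zero_of_surjective hf hU) g

theorem continuousMapComplex_exact_of_exact_general
    (K : Type*) [NontriviallyNormedField K]
    (V : ℤ → Type*) [∀ n, AddCommGroup (V n)] [∀ n, Module K (V n)]
    [∀ n, UniformSpace (V n)] [∀ n, IsUniformAddGroup (V n)] [∀ n, ContinuousSMul K (V n)]
    [∀ n, CompleteSpace (V n)] [∀ n, TopologicalSpace.MetrizableSpace (V n)]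
    (d : ∀ n : ℤ, V n →L[K] V (n + 1))
    (hexact : ∀ (n : ℤ) (x : V (n + 1)), d (n + 1) x = 0 ↔ ∃ y : V n, d n y = x)
    (S : Type*) [TopologicalSpace S] [CompactSpace S] [T2Space S]
    [ExtremallyDisconnected S] :
    ∀ (n : ℤ) (g : C(S, V (n + 1))),
      (∀ s : S, d (n + 1) (g s) = 0) ↔ ∃ h : C(S, V n), ∀ s : S, d n (h s) = g s := by
  intro n g
  refine ⟨fun hg ↦ ?_, fun ⟨h, hh⟩ s ↦ (hexact n (g s)).2 ⟨h s, hh s⟩⟩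
  let Z := LinearMap.ker (d (n + 1) : V (n + 1) →ₗ[K] V (n + 1 + 1))
  have : CompleteSpace Z := (d (n + 1)).isClosed_ker.completeSpace_coe
  have : (𝓤 (V (n + 1))).IsCountablyGenerated := IsUniformAddGroup.uniformity_countably_generated
  have : (𝓤 Z).IsCountablyGenerated := by rw [uniformity_subtype]; infer_instance
  let f : V n →L[K] Z := (d n).codRestrict Z fun x ↦ (hexact n _).2 ⟨x, rfl⟩
  have hf : Function.Surjective f := fun z ↦
    let ⟨y, hy⟩ := (hexact n z).1 z.2; ⟨y, Subtype.ext hy⟩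
  obtain ⟨h, hh⟩ := f.exists_continuousMap_lift_of_surjective hf ⟨fun s ↦ ⟨g s, hg s⟩, by fun_prop⟩
  exact ⟨h, fun s ↦ congrArg Subtype.val (hh s)⟩

/-- If `(Vⁿ, dⁿ)_{n ∈ ℤ}` is an exact cochain complex of `K`-Fréchet spaces (complete
metrizable topological vector spaces over a non-archimedean local field `K`) with continuous
`K`-linear differentials, then for every extremally disconnected compact Hausdorff space `S`
the complex `(C⁰(S, Vⁿ))_{n ∈ ℤ}` (with differentials given by post-composition) is exact. -/
theorem continuousMapComplex_exact_of_exact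
    (K : Type*) [NontriviallyNormedField K] (hK : IsNonarchLocalField K)
    (V : ℤ → Type*) [∀ n, AddCommGroup (V n)] [∀ n, Module K (V n)]
    [∀ n, UniformSpace (V n)] [∀ n, IsUniformAddGroup (V n)] [∀ n, ContinuousSMul K (V n)]
    [∀ n, CompleteSpace (V n)] [∀ n, TopologicalSpace.MetrizableSpace (V n)]
    (d : ∀ n : ℤ, V n →L[K] V (n + 1))
    (hdd : ∀ (n : ℤ) (x : V n), d (n + 1) (d n x) = 0)
    (hexact : ∀ (n : ℤ) (x : V (n + 1)), d (n + 1) x = 0 ↔ ∃ y : V n, d n y = x)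
    (S : Type*) [TopologicalSpace S] [CompactSpace S] [T2Space S]
    [ExtremallyDisconnected S] :
    ∀ (n : ℤ) (g : C(S, V (n + 1))),
      (∀ s : S, d (n + 1) (g s) = 0) ↔ ∃ h : C(S, V n), ∀ s : S, d n (h s) = g s :=
  continuousMapComplex_exact_of_exact_general K V d hexact S
end

section
/- Let K be a non-archimedean local field, and let (V_n)_{n ∈ ℕ} be an inverse system of K-Banach spaces with continuous K-linear transition maps f_n : V_{n+1} → V_n; for m ≥ n write f_{nm} : V_m → V_n for the composite (f_{nn} = id). Assume that for each n ∈ ℕ there exists k ≥ n such that for every m ≥ k the image f_{nm}(V_m) is dense in f_{nk}(V_k) (i.e. f_{nk}(V_k) is contained in the closure of f_{nm}(V_m) in V_n). Then for every extremally disconnected compact Hausdorff topological space S, the map ∏_{n ∈ ℕ} C⁰(S, V_n) → ∏_{n ∈ ℕ} C⁰(S, V_n) sending (g_n)_n to (g_n − f_n ∘ g_{n+1})_n is surjective; equivalently, the derived inverse limit lim¹ of the tower (C⁰(S, V_n))_n of abelian groups vanishes. -/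
open Topology Set

theorem exists_mem_forall_dist_lt_of_mem_closure {X ι : Type*} {E : ι → Type*}
    [TopologicalSpace X] [∀ j, PseudoMetricSpace (E j)] {s : Set X} {w : X}
    (hw : w ∈ closure s) (ψ : ∀ j, X → E j) (hψ : ∀ j, Continuous (ψ j)) (J : Finset ι)
    {ε : ℝ} (hε : 0 < ε) : ∃ x ∈ s, ∀ j ∈ J, dist (ψ j x) (ψ j w) < ε := by
  have hnear : ∀ᶠ x in 𝓝 w, ∀ j ∈ J, dist (ψ j x) (ψ j w) < ε :=
    J.eventually_all.2 fun j _ => (hψ j).continuousAt.eventually (Metric.ball_mem_nhds _ hε)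
  exact ((mem_closure_iff_frequently.1 hw).and_eventually hnear).exists

theorem ContinuousMap.mem_closure_range_comp {X A E : Type*} [TopologicalSpace X]
    [TotallyDisconnectedSpace X] [T2Space X] [CompactSpace X] [TopologicalSpace A]
    [PseudoMetricSpace E] (φ : C(A, E)) {f : C(X, E)} (hf : ∀ x, f x ∈ closure (range φ)) :
    f ∈ closure (range φ.comp) := by
  refine Metric.mem_closure_iff.2 fun ε hε => ?_
  have hε3 : 0 < ε / 3 := by positivity
  obtain ⟨n, g, h, hg, hgh⟩ := f.exists_finite_approximation_of_mem_nhds_diagonal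
    (nhdsSet_diagonal_le_uniformity (Metric.dist_mem_uniformity hε3))
  simp only [mem_ofPred_eq] at hgh
  have hlift : ∀ i : range g, ∃ a, dist (h i) (φ a) < 2 * (ε / 3) := by
    rintro ⟨_, x, rfl⟩
    obtain ⟨_, ⟨a, rfl⟩, ha⟩ := Metric.mem_closure_iff.1 (hf x) _ hε3
    exact ⟨a, by linarith [dist_triangle_left (h (g x)) (φ a) (f x), hgh x]⟩
  choose a ha using hlift
  let z : C(X, A) :=
    ⟨a ∘ rangeFactorization g, continuous_of_discreteTopology.comp hg.rangeFactorization⟩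
  refine ⟨φ.comp z, mem_range_self z, (ContinuousMap.dist_lt_iff hε).2 fun x => ?_⟩
  calc dist (f x) (φ (z x)) ≤ dist (f x) (h (g x)) + dist (h (g x)) (φ (z x)) := dist_triangle ..
    _ < ε / 3 + 2 * (ε / 3) := add_lt_add (hgh x) (ha (rangeFactorization g x))
    _ = ε := by ring

theorem exists_strictMono_forall_le (k : ℕ → ℕ) :
    ∃ ν : ℕ → ℕ, StrictMono ν ∧ ∀ j, k (ν j) ≤ ν (j + 1) := by
  let ν (j : ℕ) : ℕ := Nat.rec 0 (fun _ p => max (k p) (p + 1)) j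
  exact ⟨ν, strictMono_nat_of_lt_succ fun j => Nat.lt_of_succ_le (le_max_right _ _),
    fun j => le_max_left _ _⟩

/-- An inverse system of abelian groups indexed by `ℕ`. Only the maps `map i j` with `i ≤ j`
are meaningful; the others are arbitrary. -/
structure Tower (A : ℕ → Type*) [∀ n, AddCommGroup (A n)] where
  map : ∀ i j, A j →+ A i
  map_self : ∀ i x, map i i x = x
  map_map : ∀ {i j k}, i ≤ j → j ≤ k → ∀ x, map i j (map j k x) = map i k x

namespace Tower

section Algebra

variable {A : ℕ → Type*} [∀ n, AddCommGroup (A n)] (T : Tower A)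

/-- Its cokernel is `lim¹` of the tower. -/
def shiftSub : (∀ n, A n) →+ (∀ n, A n) :=
  AddMonoidHom.mk' (fun a n => a n - T.map n (n + 1) (a (n + 1))) fun a b => by
    ext n; simp only [Pi.add_apply, map_add]; abel

@[simp]
theorem shiftSub_apply (a : ∀ n, A n) (n : ℕ) :
    T.shiftSub a n = a n - T.map n (n + 1) (a (n + 1)) := rfl

def comp {ν : ℕ → ℕ} (hν : Monotone ν) : Tower (fun j => A (ν j)) where
  map i j := T.map (ν i) (ν j)
  map_self i := T.map_self (ν i)
  map_map hij hjk := T.map_map (hν hij) (hν hjk)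

theorem map_sum_Ico (y : ∀ n, A n) {n m : ℕ} (h : n ≤ m) (p : ℕ) :
    T.map n m (∑ i ∈ Finset.Ico m p, T.map m i (y i)) = ∑ i ∈ Finset.Ico m p, T.map n i (y i) := by
  rw [map_sum]
  exact Finset.sum_congr rfl fun i hi => T.map_map h (Finset.mem_Ico.1 hi).1 _

theorem shiftSub_surjective_of_comp {ν : ℕ → ℕ} (hν : StrictMono ν)
    (h : Function.Surjective (T.comp hν.monotone).shiftSub) : Function.Surjective T.shiftSub := by
  intro y
  obtain ⟨a, ha⟩ := h fun j => ∑ i ∈ Finset.Ico (ν j) (ν (j + 1)), T.map (ν j) i (y i)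
  -- `G n j` solves the equation at `n`, read off from block `j`; it is independent of `j`
  let G (n j : ℕ) : A n := T.map n (ν j) (a j) + ∑ i ∈ Finset.Ico n (ν j), T.map n i (y i)
  have hG_succ : ∀ n j, n ≤ ν j → G n (j + 1) = G n j := by
    intro n j hn
    have haj : a j = ∑ i ∈ Finset.Ico (ν j) (ν (j + 1)), T.map (ν j) i (y i)
        + T.map (ν j) (ν (j + 1)) (a (j + 1)) := sub_eq_iff_eq_add.1 (congrFun ha j)
    simp only [G, haj, map_add, T.map_sum_Ico y hn, T.map_map hn (hν.monotone j.le_succ)]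
    rw [← Finset.sum_Ico_consecutive _ hn (hν.monotone j.le_succ)]
    abel
  have hG : ∀ n j j', n ≤ ν j → j ≤ j' → G n j' = G n j := by
    intro n j j' hn hjj'
    induction j', hjj' using Nat.le_induction with
    | base => rfl
    | succ j' hjj' ih => rw [hG_succ n j' (hn.trans (hν.monotone hjj')), ih]
  refine ⟨fun n => G n n, funext fun n => ?_⟩
  have hn : n + 1 ≤ ν (n + 1) := hν.le_apply
  rw [shiftSub_apply, ← hG n n (n + 1) hν.le_apply n.le_succ]
  simp only [G, map_add, T.map_sum_Ico y n.le_succ, T.map_map n.le_succ hn,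
    Finset.sum_eq_sum_Ico_succ_bot (n.lt_of_succ_le hn), T.map_self]
  abel

end Algebra

section Topology

variable {A : ℕ → Type*} [∀ n, AddCommGroup (A n)] [∀ n, TopologicalSpace (A n)] (T : Tower A)

def IsMittagLefflerWith (k : ℕ → ℕ) : Prop :=
  ∀ n m, k n ≤ m → range (T.map n (k n)) ⊆ closure (range (T.map n m))

def IsMittagLeffler : Prop :=
  ∃ k : ℕ → ℕ, (∀ n, n ≤ k n) ∧ T.IsMittagLefflerWith k

theorem IsMittagLefflerWith.comp {T : Tower A} {k ν : ℕ → ℕ} (hT : T.IsMittagLefflerWith k)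
    (hk : ∀ n, n ≤ k n) (hν : Monotone ν) (hkν : ∀ j, k (ν j) ≤ ν (j + 1)) :
    (T.comp hν).IsMittagLefflerWith (· + 1) := by
  rintro j m hjm _ ⟨x, rfl⟩
  change T.map (ν j) (ν (j + 1)) x ∈ closure (range (T.map (ν j) (ν m)))
  rw [← T.map_map (hk _) (hkν j)]
  exact hT _ _ ((hkν j).trans (hν hjm)) (mem_range_self _)

variable [∀ n, IsTopologicalAddGroup (A n)]

def postcomp (hT : ∀ i j, Continuous (T.map i j)) (S : Type*) [TopologicalSpace S] :
    Tower (fun n => C(S, A n)) where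
  map i j := (T.map i j).compLeftContinuous S (hT i j)
  map_self i x := ContinuousMap.ext fun s => T.map_self i (x s)
  map_map hij hjk x := ContinuousMap.ext fun s => T.map_map hij hjk (x s)

@[simp]
theorem postcomp_map_apply (hT : ∀ i j, Continuous (T.map i j)) (S : Type*) [TopologicalSpace S]
    (i j : ℕ) (x : C(S, A j)) (s : S) : (T.postcomp hT S).map i j x s = T.map i j (x s) := rfl

theorem continuous_postcomp_map (hT : ∀ i j, Continuous (T.map i j)) (S : Type*)
    [TopologicalSpace S] (i j : ℕ) : Continuous ((T.postcomp hT S).map i j) :=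
  ContinuousMap.continuous_postcomp _

section T2

variable [∀ n, T2Space (A n)]

theorem shiftSub_tsum (hT : ∀ i j, Continuous (T.map i j)) {c : ∀ n, A n}
    (hc : ∀ j, Summable fun i => T.map j (j + i) (c (j + i))) :
    T.shiftSub (fun j => ∑' i, T.map j (j + i) (c (j + i))) = c := by
  funext j
  have hshift : ∀ i, T.map j (j + 1) (T.map (j + 1) (j + 1 + i) (c (j + 1 + i)))
      = T.map j (j + (i + 1)) (c (j + (i + 1))) := by
    intro i
    rw [T.map_map (by omega) (by omega), show j + 1 + i = j + (i + 1) by omega]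
  rw [shiftSub_apply, (hc (j + 1)).map_tsum _ (hT j (j + 1)), (hc j).tsum_eq_zero_add]
  simp only [hshift, add_sub_cancel_right]
  exact T.map_self j (c j)

end T2

end Topology

section Normed

variable {A : ℕ → Type*} [∀ n, NormedAddCommGroup (A n)]

theorem IsMittagLeffler.postcomp {T : Tower A}
    (hML : T.IsMittagLeffler) (hT : ∀ i j, Continuous (T.map i j)) (S : Type*)
    [TopologicalSpace S] [TotallyDisconnectedSpace S] [T2Space S] [CompactSpace S] :
    (T.postcomp hT S).IsMittagLeffler := by
  obtain ⟨k, hk, hkML⟩ := hML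
  refine ⟨k, hk, fun n m hm => ?_⟩
  rintro _ ⟨x, rfl⟩
  exact ContinuousMap.mem_closure_range_comp ⟨T.map n m, hT n m⟩
    fun s => hkML n m hm (mem_range_self (x s))

theorem shiftSub_surjective_of_isMittagLefflerWith_succ [∀ n, CompleteSpace (A n)] (T : Tower A)
    (hT : ∀ i j, Continuous (T.map i j))
    (hML : T.IsMittagLefflerWith (· + 1)) : Function.Surjective T.shiftSub := by
  intro b
  have hstep : ∀ m (x : A (m + 1)), ∃ x' : A (m + 2), ∀ j ∈ Finset.Iic m,
      ‖T.map j (m + 1) (b (m + 1) - (x - T.map (m + 1) (m + 2) x'))‖ < (1 / 2) ^ m := by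
    intro m x
    obtain ⟨_, ⟨x', rfl⟩, hx'⟩ := exists_mem_forall_dist_lt_of_mem_closure
      (hML m (m + 2) (by simp) (mem_range_self (x - b (m + 1))))
      (fun j => T.map j m) (fun j => hT j m) (Finset.Iic m)
      (by positivity : (0 : ℝ) < (1 / 2) ^ m)
    refine ⟨x', fun j hj => ?_⟩
    have hpush : T.map m (m + 1) (b (m + 1) - (x - T.map (m + 1) (m + 2) x'))
        = T.map m (m + 2) x' - T.map m (m + 1) (x - b (m + 1)) := by
      simp only [map_sub, T.map_map m.le_succ (m + 1).le_succ]
      abel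
    rw [← T.map_map (Finset.mem_Iic.1 hj) m.le_succ, hpush, map_sub, ← dist_eq_norm]
    exact hx' j hj
  choose next hnext using hstep
  -- the correction `z` is built by recursion, with `z 0 = z 1 = 0`
  let w (m : ℕ) : A (m + 1) := Nat.rec (motive := fun m => A (m + 1)) 0 (fun m x => next m x) m
  let z : ∀ n, A n := fun n => Nat.casesOn (motive := A) n 0 w
  let c := b - T.shiftSub z
  have hc : ∀ j, Summable fun i => T.map j (j + i) (c (j + i)) := by
    intro j
    refine (summable_nat_add_iff 1).1 (Summable.of_norm_bounded
      (summable_geometric_of_lt_one (by norm_num) (by norm_num : (1 / 2 : ℝ) < 1)) fun i => ?_)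
    calc ‖T.map j (j + i + 1) (c (j + i + 1))‖ ≤ (1 / 2) ^ (j + i) :=
          (hnext (j + i) (w (j + i)) j (Finset.mem_Iic.2 (by omega))).le
      _ ≤ (1 / 2) ^ i := pow_le_pow_of_le_one (by norm_num) (by norm_num) (by omega)
  refine ⟨(fun j => ∑' i, T.map j (j + i) (c (j + i))) + z, ?_⟩
  rw [map_add, T.shiftSub_tsum hT hc, sub_add_cancel]

theorem IsMittagLeffler.shiftSub_surjective [∀ n, CompleteSpace (A n)] {T : Tower A}
    (hML : T.IsMittagLeffler) (hT : ∀ i j, Continuous (T.map i j)) :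
    Function.Surjective T.shiftSub := by
  obtain ⟨k, hk, hkML⟩ := hML
  obtain ⟨ν, hν, hkν⟩ := exists_strictMono_forall_le k
  exact T.shiftSub_surjective_of_comp hν <|
    (T.comp hν.monotone).shiftSub_surjective_of_isMittagLefflerWith_succ (fun i j => hT _ _)
      (hkML.comp hk hν.monotone hkν)

end Normed

section OfLE

variable {A : ℕ → Type*} [∀ n, AddCommGroup (A n)] (F : ∀ i j, i ≤ j → A j →+ A i)
  (hF_self : ∀ i x, F i i le_rfl x = x)
  (hF_map : ∀ {i j k} (hij : i ≤ j) (hjk : j ≤ k) (x : A k),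
    F i j hij (F j k hjk x) = F i k (hij.trans hjk) x)

def ofLE : Tower A where
  map i j := if h : i ≤ j then F i j h else 0
  map_self i x := by simp [hF_self]
  map_map hij hjk x := by simp [hij, hjk, hij.trans hjk, hF_map]

theorem ofLE_map {i j : ℕ} (h : i ≤ j) : (ofLE F hF_self hF_map).map i j = F i j h := dif_pos h

theorem continuous_ofLE_map [∀ n, TopologicalSpace (A n)] (hF : ∀ i j h, Continuous (F i j h))
    (i j : ℕ) : Continuous ((ofLE F hF_self hF_map).map i j) := by
  by_cases h : i ≤ j
  · rw [ofLE_map F hF_self hF_map h]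
    exact hF i j h
  · simp only [ofLE, h, dite_false]
    exact continuous_const

theorem isMittagLeffler_ofLE [∀ n, TopologicalSpace (A n)]
    (hML : ∀ n, ∃ k, ∃ hk : n ≤ k, ∀ m (hm : k ≤ m),
      range (F n k hk) ⊆ closure (range (F n m (hk.trans hm)))) :
    (ofLE F hF_self hF_map).IsMittagLeffler := by
  choose k hk hkML using hML
  refine ⟨k, hk, fun n m hm => ?_⟩
  rw [ofLE_map F hF_self hF_map (hk n), ofLE_map F hF_self hF_map ((hk n).trans hm)]
  exact hkML n m hm

end OfLE

end Tower

theorem ContinuousLinearMap.map_map_of_eq_comp_succ {R : Type*} [Semiring R] {V : ℕ → Type*}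
    [∀ n, TopologicalSpace (V n)] [∀ n, AddCommMonoid (V n)] [∀ n, Module R (V n)]
    (f : ∀ n, V (n + 1) →L[R] V n) (F : ∀ n m, n ≤ m → V m →L[R] V n)
    (hFid : ∀ n, F n n le_rfl = ContinuousLinearMap.id R (V n))
    (hFsucc : ∀ (n m : ℕ) (h : n ≤ m), F n (m + 1) (h.trans m.le_succ) = (F n m h).comp (f m))
    {n m p : ℕ} (hnm : n ≤ m) (hmp : m ≤ p) (x : V p) :
    F n m hnm (F m p hmp x) = F n p (hnm.trans hmp) x := by
  induction p, hmp using Nat.le_induction with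
  | base => rw [hFid]; rfl
  | succ p hmp ih =>
    rw [hFsucc m p hmp, hFsucc n p (hnm.trans hmp)]
    exact ih (f p x)

theorem condensed_mittagLeffler_general
    (K : Type*) [NontriviallyNormedField K]
    (V : ℕ → Type*) [∀ n, NormedAddCommGroup (V n)] [∀ n, NormedSpace K (V n)]
    [∀ n, CompleteSpace (V n)]
    (f : ∀ n : ℕ, V (n + 1) →L[K] V n)
    -- `F n m h` is the composite transition map `f_{nm} : V m → V n` for `n ≤ m`
    (F : ∀ n m : ℕ, n ≤ m → (V m →L[K] V n))
    (hFid : ∀ n, F n n le_rfl = ContinuousLinearMap.id K (V n))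
    (hFsucc : ∀ (n m : ℕ) (h : n ≤ m),
      F n (m + 1) (h.trans (Nat.le_succ m)) = (F n m h).comp (f m))
    -- Mittag-Leffler density: for each `n` there is `k ≥ n` such that for all `m ≥ k`,
    -- `f_{nm}(V m)` is dense in `f_{nk}(V k)`
    (hML : ∀ n : ℕ, ∃ k : ℕ, ∃ hk : n ≤ k, ∀ (m : ℕ) (hm : k ≤ m),
      Set.range (F n k hk) ⊆ closure (Set.range (F n m (hk.trans hm))))
    (S : Type*) [TopologicalSpace S] [CompactSpace S] [T2Space S]
    [ExtremallyDisconnected S] :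
    ∀ y : ∀ n : ℕ, C(S, V n), ∃ g : ∀ n : ℕ, C(S, V n),
      ∀ (n : ℕ) (s : S), g n s - f n (g (n + 1) s) = y n s := by
  intro y
  have hF_self (n : ℕ) (x : V n) : F n n le_rfl x = x := by rw [hFid]; rfl
  let T : Tower V := .ofLE (fun n m h => F n m h) hF_self
    (ContinuousLinearMap.map_map_of_eq_comp_succ f F hFid hFsucc)
  have hT : ∀ i j, Continuous (T.map i j) :=
    Tower.continuous_ofLE_map _ hF_self _ fun n m h => (F n m h).continuous
  have hTML : T.IsMittagLeffler := Tower.isMittagLeffler_ofLE _ hF_self _ hML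
  obtain ⟨g, hg⟩ := (hTML.postcomp hT S).shiftSub_surjective (T.continuous_postcomp_map hT S) y
  have hf (n : ℕ) (x : V (n + 1)) : T.map n (n + 1) x = f n x := by
    rw [show T.map n (n + 1) = F n (n + 1) n.le_succ from
      Tower.ofLE_map (fun n m h => (F n m h : V m →+ V n)) hF_self _ n.le_succ]
    simpa [hFid] using congrArg (· x) (hFsucc n n le_rfl)
  refine ⟨g, fun n s => ?_⟩
  simpa [hf] using congrArg (fun g => g n s) hg

/-- Condensed Mittag-Leffler lemma, tested on an extremally disconnected set: given an inverse
system of Banach spaces over a non-archimedean local field whose transition images satisfy the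
Grothendieck density (Mittag-Leffler) condition, for every extremally disconnected compact
Hausdorff space `S` the shift-difference map on `∏ₙ C⁰(S, Vₙ)` is surjective (i.e. the `lim¹`
of the tower `(C⁰(S, Vₙ))ₙ` vanishes). -/
theorem condensed_mittagLeffler
    (K : Type*) [NontriviallyNormedField K] (hK : IsNonarchLocalField K)
    (V : ℕ → Type*) [∀ n, NormedAddCommGroup (V n)] [∀ n, NormedSpace K (V n)]
    [∀ n, CompleteSpace (V n)]
    (hult : ∀ (n : ℕ) (x y : V n), ‖x + y‖ ≤ max ‖x‖ ‖y‖)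
    (f : ∀ n : ℕ, V (n + 1) →L[K] V n)
    -- `F n m h` is the composite transition map `f_{nm} : V m → V n` for `n ≤ m`
    (F : ∀ n m : ℕ, n ≤ m → (V m →L[K] V n))
    (hFid : ∀ n, F n n le_rfl = ContinuousLinearMap.id K (V n))
    (hFsucc : ∀ (n m : ℕ) (h : n ≤ m),
      F n (m + 1) (h.trans (Nat.le_succ m)) = (F n m h).comp (f m))
    -- Mittag-Leffler density: for each `n` there is `k ≥ n` such that for all `m ≥ k`,
    -- `f_{nm}(V m)` is dense in `f_{nk}(V k)`
    (hML : ∀ n : ℕ, ∃ k : ℕ, ∃ hk : n ≤ k, ∀ (m : ℕ) (hm : k ≤ m),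
      Set.range (F n k hk) ⊆ closure (Set.range (F n m (hk.trans hm))))
    (S : Type*) [TopologicalSpace S] [CompactSpace S] [T2Space S]
    [ExtremallyDisconnected S] :
    ∀ y : ∀ n : ℕ, C(S, V n), ∃ g : ∀ n : ℕ, C(S, V n),
      ∀ (n : ℕ) (s : S), g n s - f n (g (n + 1) s) = y n s :=
  condensed_mittagLeffler_general K V f F hFid hFsucc hML S
end

section
/- Let K be a non-archimedean local field. Then every K-Banach space V is isomorphic, as a topological K-vector space, to the space C⁰(S, K) of continuous K-valued functions on some profinite set S, equipped with the supremum norm: there exist a compact Hausdorff totally disconnected topological space S and a K-linear homeomorphism V ≅ C⁰(S, K). -/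
universe u

/-!
Choose `π ∈ K` with `‖π‖ > 1` generating the value group of `K` and put `ρ = ‖π‖`. By Zorn's
lemma there is a maximal almost orthogonal set `M` (every coefficient of a finite combination of
elements of `M` has norm `< ρ` times the norm of the combination) inside the shell
`ρ⁻¹ < ‖v‖ ≤ 1`. As the norms of `K` are spaced by factors of `ρ`, a vector of the shell at
distance `> ρ⁻¹` from `span M` could be added to `M`; so `span M` comes `ρ⁻¹`-close to every
vector of the shell, and rescaling by powers of `π` shows that it is dense.

Points of `M` are `ρ⁻¹` apart, so `M` is discrete. For `m₀ ∈ M` let `S` be the one-point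
compactification of `M \ {m₀}`. Writing `f ∈ C(S, K)` as `f(∞) · 1 + ∑ (f m - f(∞)) · 𝟙_{m}` and
sending `1 ↦ m₀`, `𝟙_{m} ↦ m` gives a bounded linear map `T : C(S, K) → V` with
`‖f‖ ≤ ρ ‖T f‖`; its range is closed and contains `span M`, so `T` is an isomorphism.
-/

open Filter Topology OnePoint

section ValueGroup

variable {K : Type*} [NontriviallyNormedField K]

theorem exists_one_lt_norm_forall_norm_eq_zpow {q : ℝ} (hq : 1 < q)
    (hval : ∀ x : K, x ≠ 0 → ∃ n : ℤ, ‖x‖ = q ^ n) :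
    ∃ π : K, 1 < ‖π‖ ∧ ∀ x : K, x ≠ 0 → ∃ m : ℤ, ‖x‖ = ‖π‖ ^ m := by
  classical
  have exponent_of_one_lt : ∀ y : K, 1 < ‖y‖ → ∃ n : ℕ, ‖y‖ = q ^ ((n : ℤ) + 1) := by
    intro y hy
    obtain ⟨n, hn⟩ := hval y (norm_pos_iff.1 (one_pos.trans hy))
    have : 0 < n := (one_lt_zpow_iff_right₀ hq).1 (hn ▸ hy)
    exact ⟨n.toNat - 1, by rw [hn]; congr 1; omega⟩
  have hex : ∃ n : ℕ, ∃ x : K, ‖x‖ = q ^ ((n : ℤ) + 1) := by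
    obtain ⟨x, hx⟩ := NormedField.exists_one_lt_norm K
    obtain ⟨n, hn⟩ := exponent_of_one_lt x hx
    exact ⟨n, x, hn⟩
  obtain ⟨π, hπ⟩ := Nat.find_spec hex
  have hπ1 : 1 < ‖π‖ := by rw [hπ]; exact one_lt_zpow₀ hq (by omega)
  have hmin : ∀ y : K, 1 < ‖y‖ → ‖π‖ ≤ ‖y‖ := by
    intro y hy
    obtain ⟨n, hn⟩ := exponent_of_one_lt y hy
    rw [hπ, hn]
    exact zpow_le_zpow_right₀ hq.le (by have := Nat.find_min' hex ⟨y, hn⟩; omega)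
  refine ⟨π, hπ1, fun x hx => ?_⟩
  obtain ⟨m, hm⟩ := exists_mem_Ico_zpow (norm_pos_iff.2 hx) hπ1
  refine ⟨m, le_antisymm ?_ hm.1⟩
  -- otherwise `x * π ^ (-m)` would have norm strictly between `1` and `‖π‖`
  by_contra! h
  have hπm : 0 < ‖π‖ ^ m := zpow_pos (one_pos.trans hπ1) m
  have hy : ‖x * π ^ (-m)‖ = ‖x‖ / ‖π‖ ^ m := by
    rw [norm_mul, norm_zpow, zpow_neg, div_eq_mul_inv]
  refine (hmin (x * π ^ (-m)) ?_).not_gt ?_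
  · rwa [hy, one_lt_div hπm]
  · rw [hy, div_lt_iff₀ hπm, ← zpow_one_add₀ (one_pos.trans hπ1).ne', add_comm]
    exact hm.2

theorem norm_le_of_norm_lt_mul {ρ : ℝ} (hρ : 1 < ρ)
    (hval : ∀ x : K, x ≠ 0 → ∃ n : ℤ, ‖x‖ = ρ ^ n) {a b : K} (h : ‖a‖ < ρ * ‖b‖) :
    ‖a‖ ≤ ‖b‖ := by
  rcases eq_or_ne a 0 with rfl | ha
  · simp
  rcases eq_or_ne b 0 with rfl | hb
  · rw [norm_zero, mul_zero] at h
    exact absurd h (norm_nonneg a).not_gt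
  obtain ⟨i, hi⟩ := hval a ha
  obtain ⟨j, hj⟩ := hval b hb
  rw [hi, hj, ← zpow_one_add₀ (one_pos.trans hρ).ne', zpow_lt_zpow_iff_right₀ hρ] at h
  rw [hi, hj]
  exact zpow_le_zpow_right₀ hρ.le (by omega)

end ValueGroup

section AlmostOrthogonal

variable {K : Type*} [NontriviallyNormedField K] {V : Type*} [NormedAddCommGroup V]
  [NormedSpace K V] {ρ : ℝ} {M : Set V}

variable (K) in
def IsAlmostOrthogonal (ρ : ℝ) (M : Set V) : Prop :=
  ∀ s : Finset V, ↑s ⊆ M → ∀ c : V → K, ∀ i ∈ s, c i ≠ 0 → ‖c i‖ < ρ * ‖∑ j ∈ s, c j • j‖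

theorem IsAlmostOrthogonal.inv_lt_norm_sub (hM : IsAlmostOrthogonal K ρ M) (hρ : 0 < ρ)
    {m m' : V} (hm : m ∈ M) (hm' : m' ∈ M) (hne : m ≠ m') : ρ⁻¹ < ‖m - m'‖ := by
  classical
  have h := hM {m, m'} (by simp [Set.insert_subset_iff, hm, hm'])
    (fun j => if j = m' then -1 else 1) m (by simp) (by simp [hne])
  rw [Finset.sum_pair hne, if_neg hne, if_pos rfl, one_smul, neg_one_smul, norm_one,
    ← sub_eq_add_neg] at h
  rwa [inv_lt_iff_one_lt_mul₀' hρ]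

theorem IsAlmostOrthogonal.discreteTopology (hM : IsAlmostOrthogonal K ρ M) (hρ : 0 < ρ) :
    DiscreteTopology M :=
  .of_forall_le_dist (inv_pos.2 hρ) fun m m' hne => by
    show ρ⁻¹ ≤ dist (m : V) m'
    rw [dist_eq_norm]
    exact (hM.inv_lt_norm_sub hρ m.2 m'.2 (Subtype.coe_ne_coe.2 hne)).le

theorem IsAlmostOrthogonal.norm_le_mul_norm_sum (hM : IsAlmostOrthogonal K ρ M) (hρ : 0 ≤ ρ)
    (t : Finset M) (a : M → K) {m : M} (hm : m ∈ t) :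
    ‖a m‖ ≤ ρ * ‖∑ i ∈ t, a i • (i : V)‖ := by
  classical
  rcases eq_or_ne (a m) 0 with h0 | h0
  · rw [h0, norm_zero]; positivity
  let c : V → K := fun x => if h : x ∈ M then a ⟨x, h⟩ else 0
  have hsum : ∑ j ∈ t.map (.subtype _), c j • j = ∑ i ∈ t, a i • (i : V) := by
    simp [c]
  have := hM (t.map (.subtype _)) (by simp) c m (by simpa using hm) (by simpa [c] using h0)
  rw [hsum] at this
  simpa [c] using this.le

theorem IsAlmostOrthogonal.norm_le_mul_norm_tsum (hM : IsAlmostOrthogonal K ρ M) (hρ : 0 ≤ ρ)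
    {a : M → K} (ha : Summable fun m : M => a m • (m : V)) (m : M) :
    ‖a m‖ ≤ ρ * ‖∑' i : M, a i • (i : V)‖ :=
  ge_of_tendsto (ha.hasSum.norm.const_mul ρ) <| eventually_atTop.2
    ⟨{m}, fun _ ht => hM.norm_le_mul_norm_sum hρ _ a (ht (Finset.mem_singleton_self m))⟩

theorem exists_maximal_isAlmostOrthogonal (P : Set V) (ρ : ℝ) :
    ∃ M, Maximal (fun N : Set V => N ⊆ P ∧ IsAlmostOrthogonal K ρ N) M := by
  refine zorn_subset _ fun C hC hchain => ⟨⋃₀ C,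
    ⟨Set.sUnion_subset fun N hN => (hC hN).1, fun s hs c i hi hci => ?_⟩,
    fun _ => Set.subset_sUnion_of_mem⟩
  obtain ⟨N₀, hN₀, -⟩ := hs hi
  obtain ⟨N, hNC, hsN⟩ : ∃ N ∈ C, (s : Set V) ⊆ N :=
    hchain.directedOn.exists_mem_subset_of_finset_subset_biUnion ⟨N₀, hN₀⟩
      (by rwa [← Set.sUnion_eq_biUnion])
  exact (hC hNC).2 s hsN c i hi hci

theorem IsAlmostOrthogonal.insert [IsUltrametricDist V] (hρ : 1 < ρ)
    (hval : ∀ x : K, x ≠ 0 → ∃ n : ℤ, ‖x‖ = ρ ^ n) (hM : IsAlmostOrthogonal K ρ M) {v : V}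
    (hv : ‖v‖ ≤ 1) (hfar : ∀ w ∈ Submodule.span K M, ρ⁻¹ < ‖v - w‖) :
    IsAlmostOrthogonal K ρ (insert v M) := by
  classical
  intro s hs c i hi hci
  by_cases hvs : v ∈ s
  swap
  · exact hM s (fun x hx => (hs hx).resolve_left (ne_of_mem_of_not_mem hx hvs)) c i hi hci
  have hsM : ↑(s.erase v) ⊆ M := fun x hx =>
    (hs (Finset.mem_of_mem_erase hx)).resolve_left (Finset.ne_of_mem_erase hx)
  rw [← Finset.add_sum_erase s _ hvs]
  set u := ∑ j ∈ s.erase v, c j • j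
  have hu : u ∈ Submodule.span K M :=
    Submodule.sum_mem _ fun j hj => Submodule.smul_mem _ _ (Submodule.subset_span (hsM hj))
  have hcoeff_v (hcv : c v ≠ 0) : ‖c v‖ < ρ * ‖c v • v + u‖ := by
    have hsplit : c v • v + u = c v • (v - -((c v)⁻¹ • u)) := by
      rw [smul_sub, smul_neg, smul_inv_smul₀ hcv, sub_neg_eq_add]
    have := hfar (-((c v)⁻¹ • u)) (Submodule.neg_mem _ (Submodule.smul_mem _ _ hu))
    rw [hsplit, norm_smul, ← mul_assoc, mul_comm ρ]
    calc ‖c v‖ = ‖c v‖ * ρ * ρ⁻¹ := by field_simp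
      _ < ‖c v‖ * ρ * ‖v - -((c v)⁻¹ • u)‖ := by gcongr
  rcases eq_or_ne i v with rfl | hiv
  · exact hcoeff_v hci
  have hci_lt : ‖c i‖ < ρ * ‖u‖ := hM _ hsM c i (Finset.mem_erase.2 ⟨hiv, hi⟩) hci
  rcases eq_or_ne (c v) 0 with hcv | hcv
  · rwa [hcv, zero_smul, zero_add]
  rcases le_or_gt ‖u‖ ‖c v • v + u‖ with hle | hlt
  · exact hci_lt.trans_le (by gcongr)
  have hu_le : ‖u‖ ≤ ‖c v‖ := by
    rw [← IsUltrametricDist.norm_eq_of_add_norm_lt_max (hlt.trans_le (le_max_right _ _)),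
      norm_smul]
    exact mul_le_of_le_one_right (norm_nonneg _) hv
  have hci_le : ‖c i‖ ≤ ‖c v‖ := norm_le_of_norm_lt_mul hρ hval (hci_lt.trans_le (by gcongr))
  exact hci_le.trans_lt (hcoeff_v hcv)

theorem Maximal.exists_mem_span_norm_sub_le [IsUltrametricDist V] (hρ : 1 < ρ)
    (hval : ∀ x : K, x ≠ 0 → ∃ n : ℤ, ‖x‖ = ρ ^ n)
    (hmax : Maximal (fun N : Set V => N ⊆ {v | ρ⁻¹ < ‖v‖ ∧ ‖v‖ ≤ 1} ∧
      IsAlmostOrthogonal K ρ N) M) {v : V} (hv₁ : ρ⁻¹ < ‖v‖) (hv₂ : ‖v‖ ≤ 1) :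
    ∃ w ∈ Submodule.span K M, ‖v - w‖ ≤ ρ⁻¹ := by
  by_contra! hfar
  have hvM : v ∈ M := hmax.mem_of_prop_insert
    ⟨Set.insert_subset ⟨hv₁, hv₂⟩ hmax.1.1, hmax.1.2.insert hρ hval hv₂ hfar⟩
  have := hfar v (Submodule.subset_span hvM)
  rw [sub_self, norm_zero] at this
  exact (inv_pos.2 (one_pos.trans hρ)).not_gt this

end AlmostOrthogonal

section Density

variable {K : Type*} [NontriviallyNormedField K] {V : Type*} [NormedAddCommGroup V]
  [NormedSpace K V] {π : K} {W : Submodule K V}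

theorem Submodule.exists_mem_norm_sub_le_zpow (hπ : 1 < ‖π‖)
    (happrox : ∀ v : V, ‖π‖⁻¹ < ‖v‖ → ‖v‖ ≤ 1 → ∃ w ∈ W, ‖v - w‖ ≤ ‖π‖⁻¹)
    {n : ℤ} {v : V} (hv : ‖v‖ ≤ ‖π‖ ^ (n + 1)) : ∃ w ∈ W, ‖v - w‖ ≤ ‖π‖ ^ n := by
  have hπ₀ : 0 < ‖π‖ := one_pos.trans hπ
  rcases eq_or_ne v 0 with rfl | hv₀
  · exact ⟨0, W.zero_mem, by rw [sub_zero, norm_zero]; positivity⟩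
  -- rescale `v` by a power of `π` into the shell where `happrox` applies
  obtain ⟨m, hm₁, hm₂⟩ := exists_mem_Ioc_zpow (norm_pos_iff.2 hv₀) hπ
  set t := π ^ (m + 1)
  have ht₀ : 0 < ‖t‖ := norm_pos_iff.2 (zpow_ne_zero _ (norm_pos_iff.1 hπ₀))
  have htπ : ‖t‖ * ‖π‖⁻¹ = ‖π‖ ^ m := by
    rw [norm_zpow, zpow_add_one₀ hπ₀.ne', mul_inv_cancel_right₀ hπ₀.ne']
  have hnorm : ‖t⁻¹ • v‖ = ‖t‖⁻¹ * ‖v‖ := by rw [norm_smul, norm_inv]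
  obtain ⟨w, hw, hvw⟩ := happrox (t⁻¹ • v)
    (by rw [hnorm, lt_inv_mul_iff₀ ht₀, htπ]; exact hm₁)
    (by rw [hnorm, inv_mul_le_one₀ ht₀, norm_zpow]; exact hm₂)
  refine ⟨t • w, W.smul_mem t hw, ?_⟩
  have hmn : m ≤ n := by
    have := hm₁.trans_le hv
    rw [zpow_lt_zpow_iff_right₀ hπ] at this
    omega
  calc ‖v - t • w‖ = ‖t‖ * ‖t⁻¹ • v - w‖ := by
        rw [← norm_smul, smul_sub, smul_inv_smul₀ (norm_pos_iff.1 ht₀)]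
    _ ≤ ‖t‖ * ‖π‖⁻¹ := by gcongr
    _ = ‖π‖ ^ m := htπ
    _ ≤ ‖π‖ ^ n := zpow_le_zpow_right₀ hπ.le hmn

theorem Submodule.exists_mem_norm_sub_le_zpow_of_le_zpow_add (hπ : 1 < ‖π‖)
    (happrox : ∀ v : V, ‖π‖⁻¹ < ‖v‖ → ‖v‖ ≤ 1 → ∃ w ∈ W, ‖v - w‖ ≤ ‖π‖⁻¹)
    (k : ℕ) {n : ℤ} {v : V} (hv : ‖v‖ ≤ ‖π‖ ^ (n + k)) : ∃ w ∈ W, ‖v - w‖ ≤ ‖π‖ ^ n := by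
  induction k generalizing v with
  | zero => exact ⟨0, W.zero_mem, by simpa using hv⟩
  | succ k ih =>
    obtain ⟨w₁, hw₁, h₁⟩ := exists_mem_norm_sub_le_zpow hπ happrox (n := n + k)
      (by rwa [Nat.cast_succ, ← add_assoc] at hv)
    obtain ⟨w₂, hw₂, h₂⟩ := ih h₁
    exact ⟨w₁ + w₂, W.add_mem hw₁ hw₂, by rwa [← sub_sub]⟩

theorem Submodule.dense_of_forall_exists_norm_sub_le (hπ : 1 < ‖π‖)
    (happrox : ∀ v : V, ‖π‖⁻¹ < ‖v‖ → ‖v‖ ≤ 1 → ∃ w ∈ W, ‖v - w‖ ≤ ‖π‖⁻¹) :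
    Dense (W : Set V) := by
  refine Metric.dense_iff.2 fun v ε hε => ?_
  obtain ⟨n, hn, -⟩ := exists_mem_Ioc_zpow hε hπ
  have hπn : 0 < ‖π‖ ^ n := zpow_pos (one_pos.trans hπ) n
  obtain ⟨k, hk⟩ := pow_unbounded_of_one_lt (‖v‖ / ‖π‖ ^ n) hπ
  obtain ⟨w, hw, hvw⟩ := exists_mem_norm_sub_le_zpow_of_le_zpow_add hπ happrox k (n := n) (v := v)
    (by rw [zpow_add₀ (one_pos.trans hπ).ne', zpow_natCast, ← div_le_iff₀' hπn]; exact hk.le)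
  exact ⟨w, by rw [Metric.mem_ball, dist_comm, dist_eq_norm]; exact hvw.trans_lt hn, hw⟩

end Density

section OnePointCoeff

variable {K : Type*} [NormedField K] {ι : Type*} [TopologicalSpace ι] (i₀ : ι)

open Classical in
/-- The coordinates of `f` in the basis of `C(OnePoint {i // i ≠ i₀}, K)` formed by the
constant function `1` (index `i₀`) and the indicators of the points `i ≠ i₀`. -/
noncomputable def onePointCoeff : C(OnePoint {i // i ≠ i₀}, K) →ₗ[K] ι → K where
  toFun f i := if h : i = i₀ then f ∞ else f (⟨i, h⟩ : {i // i ≠ i₀}) - f ∞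
  map_add' f g := by
    ext i
    by_cases h : i = i₀ <;> simp [h]
    ring
  map_smul' c f := by
    ext i
    by_cases h : i = i₀ <;> simp [h, mul_sub]

theorem onePointCoeff_self (f : C(OnePoint {i // i ≠ i₀}, K)) :
    onePointCoeff i₀ f i₀ = f ∞ := by
  simp [onePointCoeff]

theorem onePointCoeff_of_ne (f : C(OnePoint {i // i ≠ i₀}, K)) {i : ι} (h : i ≠ i₀) :
    onePointCoeff i₀ f i = f (⟨i, h⟩ : {i // i ≠ i₀}) - f ∞ := by
  simp [onePointCoeff, h]

theorem norm_onePointCoeff_le [IsUltrametricDist K] (f : C(OnePoint {i // i ≠ i₀}, K)) (i : ι) :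
    ‖onePointCoeff i₀ f i‖ ≤ ‖f‖ := by
  by_cases h : i = i₀
  · rw [h, onePointCoeff_self]
    exact f.norm_coe_le_norm ∞
  · rw [onePointCoeff_of_ne i₀ f h, sub_eq_add_neg]
    refine (IsUltrametricDist.norm_add_le_max _ _).trans (max_le (f.norm_coe_le_norm _) ?_)
    rw [norm_neg]
    exact f.norm_coe_le_norm ∞

theorem norm_le_of_forall_norm_onePointCoeff_le [IsUltrametricDist K]
    {f : C(OnePoint {i // i ≠ i₀}, K)} {C : ℝ} (h : ∀ i, ‖onePointCoeff i₀ f i‖ ≤ C) :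
    ‖f‖ ≤ C := by
  have hinf : ‖f ∞‖ ≤ C := onePointCoeff_self i₀ f ▸ h i₀
  refine (f.norm_le ((norm_nonneg _).trans hinf)).2 fun y => ?_
  induction y using OnePoint.rec with
  | infty => exact hinf
  | coe x =>
    have hx : f x = onePointCoeff i₀ f x + f ∞ := by
      rw [onePointCoeff_of_ne i₀ f x.2, sub_add_cancel]
    rw [hx]
    exact (IsUltrametricDist.norm_add_le_max _ _).trans (max_le (h x) hinf)

variable [DiscreteTopology ι]

theorem tendsto_onePointCoeff (f : C(OnePoint {i // i ≠ i₀}, K)) :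
    Tendsto (onePointCoeff i₀ f) cofinite (𝓝 0) := by
  have hf : Tendsto (fun x : {i // i ≠ i₀} => f x - f ∞) cofinite (𝓝 0) := by
    simpa using ((OnePoint.continuous_iff_from_discrete f).1 f.continuous).sub_const (f ∞)
  have hcof : map Subtype.val (cofinite : Filter {i // i ≠ i₀}) = cofinite := by
    rw [← Subtype.val_injective.comap_cofinite_eq, map_comap, Subtype.range_coe_subtype]
    exact (Set.finite_singleton i₀).cofinite_inf_principal_compl
  rw [← hcof, tendsto_map'_iff]
  exact hf.congr fun x => (onePointCoeff_of_ne i₀ f x.2).symm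

theorem exists_onePointCoeff_eq_single [DecidableEq ι] (i : ι) :
    ∃ f : C(OnePoint {i // i ≠ i₀}, K), onePointCoeff i₀ f = Pi.single i 1 := by
  by_cases hi : i = i₀
  · subst hi
    refine ⟨ContinuousMap.const _ 1, funext fun j => ?_⟩
    by_cases hj : j = i
    · simp [hj, onePointCoeff_self]
    · simp [hj, onePointCoeff_of_ne _ _ hj]
  · let x : {i // i ≠ i₀} := ⟨i, hi⟩
    let f : C(OnePoint {i // i ≠ i₀}, K) := continuousMapMkDiscrete (Pi.single x 1) 0
      (tendsto_const_nhds.congr' ((eventually_cofinite_ne x).mono fun y hy => by simp [hy]))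
    have hf_infty : f ∞ = 0 := rfl
    have hf_coe (y : {i // i ≠ i₀}) : f y = (Pi.single x 1 : {i // i ≠ i₀} → K) y := rfl
    refine ⟨f, funext fun j => ?_⟩
    by_cases hj : j = i₀
    · rw [hj, onePointCoeff_self, hf_infty, Pi.single_eq_of_ne (Ne.symm hi)]
    · rw [onePointCoeff_of_ne _ _ hj, hf_coe, hf_infty, sub_zero]
      simp [Pi.single_apply, x]

end OnePointCoeff

section Synthesis

variable {K : Type*} [NontriviallyNormedField K] {V : Type*} [NormedAddCommGroup V]
  [NormedSpace K V] [IsUltrametricDist V] [CompleteSpace V] {ι : Type*} {b : ι → V}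

theorem summable_smul_of_tendsto_zero (hb : ∀ i, ‖b i‖ ≤ 1) {a : ι → K}
    (ha : Tendsto a cofinite (𝓝 0)) : Summable fun i => a i • b i :=
  NonarchimedeanAddGroup.summable_of_tendsto_cofinite_zero <|
    squeeze_zero_norm
      (fun i => by rw [norm_smul]; exact mul_le_of_le_one_right (norm_nonneg _) (hb i))
      (tendsto_zero_iff_norm_tendsto_zero.1 ha)

variable [TopologicalSpace ι] [DiscreteTopology ι] [IsUltrametricDist K] (i₀ : ι)

variable (K) in
noncomputable def onePointCoeffSum (hb : ∀ i, ‖b i‖ ≤ 1) :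
    C(OnePoint {i // i ≠ i₀}, K) →L[K] V :=
  LinearMap.mkContinuous
    { toFun f := ∑' i, onePointCoeff i₀ f i • b i
      map_add' f g := by
        simp only [map_add, Pi.add_apply, add_smul]
        exact (summable_smul_of_tendsto_zero hb (tendsto_onePointCoeff i₀ f)).tsum_add
          (summable_smul_of_tendsto_zero hb (tendsto_onePointCoeff i₀ g))
      map_smul' c f := by
        simp only [_root_.map_smul, Pi.smul_apply, smul_eq_mul, mul_smul, RingHom.id_apply]
        exact tsum_const_smul'' c }
    1 fun f => by
      rw [one_mul]
      refine IsUltrametricDist.norm_tsum_le_of_forall_le_of_nonneg (norm_nonneg f) fun i => ?_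
      rw [norm_smul]
      exact (mul_le_of_le_one_right (norm_nonneg _) (hb i)).trans (norm_onePointCoeff_le i₀ f i)

theorem onePointCoeffSum_apply (hb : ∀ i, ‖b i‖ ≤ 1) (f : C(OnePoint {i // i ≠ i₀}, K)) :
    onePointCoeffSum K i₀ hb f = ∑' i, onePointCoeff i₀ f i • b i :=
  rfl

theorem mem_range_onePointCoeffSum (hb : ∀ i, ‖b i‖ ≤ 1) (i : ι) :
    b i ∈ Set.range (onePointCoeffSum K i₀ hb) := by
  classical
  obtain ⟨f, hf⟩ := exists_onePointCoeff_eq_single (K := K) i₀ i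
  refine ⟨f, ?_⟩
  rw [onePointCoeffSum_apply, hf, tsum_eq_single i fun j hj => by simp [Pi.single_eq_of_ne hj]]
  simp

end Synthesis

theorem IsAlmostOrthogonal.nonempty_continuousLinearEquiv {K : Type*}
    [NontriviallyNormedField K] [CompleteSpace K] [IsUltrametricDist K] {V : Type*}
    [NormedAddCommGroup V] [NormedSpace K V] [CompleteSpace V] [IsUltrametricDist V]
    {ρ : ℝ} {M : Set V} (hM : IsAlmostOrthogonal K ρ M) (hρ : 0 < ρ)
    (hM₁ : ∀ m ∈ M, ‖m‖ ≤ 1) (hdense : Dense (Submodule.span K M : Set V)) (m₀ : M) :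
    Nonempty (C(OnePoint {m : M // m ≠ m₀}, K) ≃L[K] V) := by
  have := hM.discreteTopology hρ
  have hb (m : M) : ‖(m : V)‖ ≤ 1 := hM₁ m m.2
  set T := onePointCoeffSum K m₀ hb
  have hlow (f : C(OnePoint {m : M // m ≠ m₀}, K)) : ‖f‖ ≤ ρ * ‖T f‖ :=
    norm_le_of_forall_norm_onePointCoeff_le m₀ fun m =>
      hM.norm_le_mul_norm_tsum hρ.le
        (summable_smul_of_tendsto_zero hb (tendsto_onePointCoeff m₀ f)) m
  have hker : LinearMap.ker (T : C(OnePoint {m : M // m ≠ m₀}, K) →ₗ[K] V) = ⊥ := by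
    refine LinearMap.ker_eq_bot'.2 fun f hf => norm_le_zero_iff.1 ?_
    simpa [show T f = 0 from hf] using hlow f
  have hclosed : IsClosed (Set.range T) :=
    (T.antilipschitz_of_bound (K := ρ.toNNReal) (by rwa [Real.coe_toNNReal _ hρ.le])).isClosed_range
      T.uniformContinuous
  have hspan : (Submodule.span K M : Set V) ⊆ Set.range T :=
    Submodule.span_le (p := LinearMap.range (T : C(OnePoint {m : M // m ≠ m₀}, K) →ₗ[K] V)).2
      fun m hm => mem_range_onePointCoeffSum m₀ hb ⟨m, hm⟩
  have hsurj : Function.Surjective T := Set.range_eq_univ.1 <| by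
    rw [← hclosed.closure_eq, ← (hdense.mono hspan).closure_eq]
  exact ⟨ContinuousLinearEquiv.ofBijective T hker (LinearMap.range_eq_top.2 hsurj)⟩

/-- Every Banach space over a non-archimedean local field `K` is isomorphic, as a topological
`K`-vector space, to the space `C⁰(S, K)` of continuous `K`-valued functions on some profinite
set `S` (with the topology of uniform convergence, i.e. of the supremum norm). -/
theorem banach_iso_continuousFunctions_profinite
    (K : Type*) [NontriviallyNormedField K] (hK : IsNonarchLocalField K)
    (V : Type u) [NormedAddCommGroup V] [NormedSpace K V] [CompleteSpace V]
    (hult : ∀ x y : V, ‖x + y‖ ≤ max ‖x‖ ‖y‖) :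
    ∃ S : Profinite.{u}, Nonempty (V ≃L[K] C(S, K)) := by
  obtain ⟨hultK, hcompK, ⟨q, hq, hval⟩, -⟩ := hK
  have := IsUltrametricDist.isUltrametricDist_of_forall_norm_add_le_max_norm hultK
  have := IsUltrametricDist.isUltrametricDist_of_forall_norm_add_le_max_norm hult
  obtain ⟨π, hπ, hπval⟩ := exists_one_lt_norm_forall_norm_eq_zpow hq hval
  obtain ⟨M, hmax⟩ := exists_maximal_isAlmostOrthogonal (K := K) {v : V | ‖π‖⁻¹ < ‖v‖ ∧ ‖v‖ ≤ 1} ‖π‖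
  have hdense : Dense (Submodule.span K M : Set V) :=
    Submodule.dense_of_forall_exists_norm_sub_le hπ fun v hv₁ hv₂ =>
      hmax.exists_mem_span_norm_sub_le hπ hπval hv₁ hv₂
  rcases M.eq_empty_or_nonempty with rfl | ⟨m₀, hm₀⟩
  · have : Subsingleton V := by
      have h := hdense.closure_eq
      rw [Submodule.span_empty, Submodule.bot_coe, closure_singleton] at h
      exact Set.subsingleton_univ_iff.1 (h ▸ Set.subsingleton_singleton)
    exact ⟨Profinite.of PEmpty, ⟨ContinuousLinearEquiv.ofBijective 0
      Submodule.eq_bot_of_subsingleton (Subsingleton.elim _ _)⟩⟩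
  · have hM := hmax.1.2
    have := hM.discreteTopology (one_pos.trans hπ)
    obtain ⟨e⟩ := hM.nonempty_continuousLinearEquiv (one_pos.trans hπ)
      (fun m hm => (hmax.1.1 hm).2) hdense ⟨m₀, hm₀⟩
    exact ⟨Profinite.of (OnePoint {m : M // m ≠ ⟨m₀, hm₀⟩}), ⟨e.symm⟩⟩
end

section
/- Let K be a non-archimedean local field, let V be a Hausdorff topological K-vector space, and let W ⊆ V be a K-linear subspace that is not closed in V. Let S₀ denote the set underlying V equipped with the discrete topology, and let S = βS₀ be its Stone–Čech compactification. Equip the quotient V/W with the quotient topology. Then the map C⁰(S, V) → C⁰(S, V/W), given by post-composition with the quotient map V → V/W, is not surjective: there exists a continuous function S → V/W that does not lift to a continuous function S → V. -/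
/-- A type synonym equipping a type with the discrete topology. -/
def DiscreteOf (X : Type*) : Type _ := X

instance (X : Type*) : TopologicalSpace (DiscreteOf X) := ⊥

instance (X : Type*) : DiscreteTopology (DiscreteOf X) := ⟨rfl⟩

/-! A continuous map on `S = β V` into the Hausdorff space `V` is determined by its values on
the dense set `V`, so there are at most `#V ^ #V = 2 ^ #V` of them. If `v ∈ closure W \ W`, the
points `[v] ≠ 0` of `V ⧸ W` are inseparable, so every map `S → {[v], 0}` is continuous, giving
`2 ^ #S` continuous maps `S → V ⧸ W`. Hausdorff's independent family gives `2 ^ #V` distinct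
ultrafilters on `V`, hence `#S ≥ 2 ^ #V` and `2 ^ #S > 2 ^ #V`: not every map lifts. -/

open Cardinal Set

universe u

section UltrafilterCount

variable {ι Y : Type*}

theorem exists_injective_ultrafilter_of_inter_iInter_compl_nonempty (D : ι → Set Y)
    (hD : ∀ i (J : Finset ι), i ∉ J → (D i ∩ ⋂ j ∈ J, (D j)ᶜ).Nonempty) :
    ∃ F : ι → Ultrafilter Y, Function.Injective F := by
  classical
  have hF : ∀ i, ∃ F : Ultrafilter Y,
      insert (D i) ((fun j => (D j)ᶜ) '' {j | j ≠ i}) ⊆ F.sets := fun i =>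
    Ultrafilter.exists_ultrafilter_of_finite_inter_nonempty _ fun T hT => by
      obtain ⟨J, hJi, hJT⟩ := Finset.subset_set_image_iff.1
        ((T.coe_erase (D i)).trans_subset (sdiff_singleton_subset_iff.2 hT))
      refine (hD i J fun hi => hJi hi rfl).mono ?_
      rintro y ⟨hyi, hyJ⟩ t ht
      by_cases hti : t = D i
      · exact hti ▸ hyi
      · obtain ⟨j, hj, rfl⟩ := Finset.mem_image.1 (hJT ▸ Finset.mem_erase.2 ⟨hti, ht⟩)
        exact mem_iInter₂.1 hyJ j hj
  choose F hF using hF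
  refine ⟨F, fun i i' hii' => by_contra fun hne => ?_⟩
  have hi : D i ∈ F i' := hii' ▸ hF i (mem_insert _ _)
  exact Ultrafilter.compl_notMem_iff.2 hi (hF i' (mem_insert_of_mem _ ⟨i, hne, rfl⟩))

variable {X : Type u}

/-- Hausdorff's independent family of subsets of `Finset X × Finset (Finset X)`. -/
def hausdorffSet (A : Set X) : Set (Finset X × Finset (Finset X)) :=
  {p | ∃ t ∈ p.2, (t : Set X) = ↑p.1 ∩ A}

theorem hausdorffSet_inter_iInter_compl_nonempty (A : Set X) (T : Finset (Set X))
    (hA : A ∉ T) : (hausdorffSet A ∩ ⋂ B ∈ T, (hausdorffSet B)ᶜ).Nonempty := by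
  classical
  have hsep : ∀ B ∈ T, ∃ x, ¬(x ∈ A ↔ x ∈ B) := fun B hB =>
    not_forall.1 fun h => hA (ext h ▸ hB)
  choose g hg using hsep
  -- `s` meets `A ∆ B` for every `B ∈ T`, so `s ∩ A ≠ s ∩ B`
  set s := T.attach.image fun B => g B.1 B.2
  refine ⟨(s, {{x ∈ s | x ∈ A}}), ⟨_, Finset.mem_singleton_self _, Finset.coe_filter _ _⟩,
    mem_iInter₂.2 fun B hB ⟨t, ht, htB⟩ => hg B hB ?_⟩
  have hgs : g B hB ∈ s := Finset.mem_image_of_mem _ (T.mem_attach ⟨B, hB⟩)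
  have hAB := Set.ext_iff.1 (Finset.mem_singleton.1 ht ▸ htB) (g B hB)
  simpa [hgs] using hAB

theorem two_power_le_mk_ultrafilter [Infinite X] : 2 ^ #X ≤ #(Ultrafilter X) := by
  obtain ⟨e⟩ : Nonempty (X ≃ Finset X × Finset (Finset X)) := by
    rw [← Cardinal.eq, mk_prod, lift_id, lift_id, mk_finset_of_infinite, mk_finset_of_infinite,
      mk_finset_of_infinite, mul_eq_self (aleph0_le_mk X)]
  obtain ⟨F, hF⟩ := exists_injective_ultrafilter_of_inter_iInter_compl_nonempty
    (fun A : Set X => e ⁻¹' hausdorffSet A) fun A T hA => by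
      simpa only [preimage_inter, preimage_iInter₂, preimage_compl] using
        (hausdorffSet_inter_iInter_compl_nonempty A T hA).preimage e.surjective
  exact mk_set (α := X) ▸ mk_le_of_injective hF

end UltrafilterCount

theorem mk_ultrafilter_le_mk_stoneCech (X : Type u) [TopologicalSpace X] [DiscreteTopology X] :
    #(Ultrafilter X) ≤ #(StoneCech X) := by
  have hpure : Continuous (pure : X → Ultrafilter X) := continuous_of_discreteTopology
  have hinv : stoneCechExtend hpure ∘ Ultrafilter.extend stoneCechUnit = id :=
    denseRange_pure.equalizer
      ((continuous_stoneCechExtend hpure).comp (continuous_ultrafilter_extend _)) continuous_id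
      (by rw [Function.comp_assoc, ultrafilter_extend_extends, stoneCechExtend_extends]; rfl)
  exact mk_le_of_injective (Function.LeftInverse.injective (congrFun hinv))

theorem mk_continuousMap_le_of_denseRange {X S Y : Type u} [TopologicalSpace S]
    [TopologicalSpace Y] [T2Space Y] {i : X → S} (hi : DenseRange i) :
    #C(S, Y) ≤ #(X → Y) :=
  mk_le_of_injective (f := fun φ : C(S, Y) => ⇑φ ∘ i) fun φ ψ h =>
    ContinuousMap.ext (congrFun (hi.equalizer φ.continuous ψ.continuous h))

section Inseparable

variable {S Y : Type u} [TopologicalSpace S] [TopologicalSpace Y] {x y : Y}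

theorem Inseparable.continuous_ite (hxy : Inseparable x y) (p : Set S)
    [DecidablePred (· ∈ p)] : Continuous fun s => if s ∈ p then x else y := by
  refine continuous_def.2 fun U hU => ?_
  convert isOpen_const (p := y ∈ U)
  ext s
  simp only [mem_preimage, mem_ofPred_eq]
  split_ifs
  exacts [hxy.mem_open_iff hU, Iff.rfl]

theorem Inseparable.two_power_le_mk_continuousMap (hxy : Inseparable x y) (hne : x ≠ y) :
    2 ^ #S ≤ #C(S, Y) := by
  classical
  refine mk_set (α := S) ▸ mk_le_of_injective
    (f := fun p => ⟨_, hxy.continuous_ite p⟩) fun p q hpq => ext fun s => ?_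
  have hs : (if s ∈ p then x else y) = if s ∈ q then x else y := ContinuousMap.congr_fun hpq s
  by_cases hp : s ∈ p <;> by_cases hq : s ∈ q <;> simp_all

end Inseparable

theorem Submodule.inseparable_mk_zero_of_mem_closure {R M : Type*} [Ring R] [AddCommGroup M]
    [Module R M] [TopologicalSpace M] [IsTopologicalAddGroup M] {N : Submodule R M} {v : M}
    (hv : v ∈ closure (N : Set M)) : Inseparable (Submodule.Quotient.mk v : M ⧸ N) 0 := by
  have h : (0 : M ⧸ N) ⤳ Submodule.Quotient.mk v := specializes_iff_mem_closure.2 <|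
    map_mem_closure N.isOpenQuotientMap_mkQ.continuous hv fun w hw =>
      (Submodule.Quotient.mk_eq_zero N).2 hw
  exact h.symm.antisymm h

theorem quotient_continuousMap_not_surjective_general
    (K : Type*) [NontriviallyNormedField K]
    (V : Type*) [AddCommGroup V] [Module K V] [TopologicalSpace V]
    [IsTopologicalAddGroup V] [T2Space V]
    (W : Submodule K V) (hW : ¬ IsClosed (W : Set V)) :
    ∃ ψ : C(StoneCech (DiscreteOf V), V ⧸ W),
      ∀ φ : C(StoneCech (DiscreteOf V), V), ⇑W.mkQ ∘ ⇑φ ≠ ⇑ψ := by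
  by_contra! hlift
  obtain ⟨v, hv, hvW⟩ : (closure (W : Set V) \ W).Nonempty :=
    sdiff_nonempty.2 fun h => hW (closure_subset_iff_isClosed.1 h)
  have : Infinite V := by
    rw [← not_finite_iff_infinite]
    intro
    exact hW (Set.toFinite _).isClosed
  have : Infinite (DiscreteOf V) := ‹Infinite V›
  set S := StoneCech (DiscreteOf V)
  let π : C(V, V ⧸ W) := ⟨W.mkQ, W.isOpenQuotientMap_mkQ.continuous⟩
  have hlift_le : #C(S, V ⧸ W) ≤ #C(S, V) :=
    mk_le_of_surjective (f := π.comp) fun ψ =>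
      (hlift ψ).imp fun _ h => ContinuousMap.ext (congrFun h)
  have hS : (2 : Cardinal) ^ #V ≤ #S :=
    (two_power_le_mk_ultrafilter (X := DiscreteOf V)).trans (mk_ultrafilter_le_mk_stoneCech _)
  have hcount : (2 : Cardinal) ^ (2 : Cardinal) ^ #V ≤ 2 ^ #V := calc
    (2 : Cardinal) ^ (2 : Cardinal) ^ #V ≤ 2 ^ #S := power_le_power_left two_ne_zero hS
    _ ≤ #C(S, V ⧸ W) :=
      (Submodule.inseparable_mk_zero_of_mem_closure hv).two_power_le_mk_continuousMap
        fun h => hvW ((Submodule.Quotient.mk_eq_zero W).1 h)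
    _ ≤ #C(S, V) := hlift_le
    _ ≤ #(DiscreteOf V → V) := mk_continuousMap_le_of_denseRange denseRange_stoneCechUnit
    _ = 2 ^ #V := by rw [mk_arrow, lift_id, lift_id]; exact power_self_eq (aleph0_le_mk V)
  exact (cantor _).not_ge hcount

/-- Let `V` be a Hausdorff topological vector space over a non-archimedean local field `K`
and let `W ⊆ V` be a non-closed subspace. Let `S = β(V_disc)` be the Stone–Čech
compactification of the underlying set of `V` with the discrete topology. Then post-composition
with the quotient map `V → V/W` does not map `C⁰(S, V)` onto `C⁰(S, V/W)`: some continuous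
map `S → V/W` admits no continuous lift `S → V`. -/
theorem quotient_continuousMap_not_surjective
    (K : Type*) [NontriviallyNormedField K] (hK : IsNonarchLocalField K)
    (V : Type*) [AddCommGroup V] [Module K V] [TopologicalSpace V]
    [IsTopologicalAddGroup V] [ContinuousSMul K V] [T2Space V]
    (W : Submodule K V) (hW : ¬ IsClosed (W : Set V)) :
    ∃ ψ : C(StoneCech (DiscreteOf V), V ⧸ W),
      ∀ φ : C(StoneCech (DiscreteOf V), V), ⇑W.mkQ ∘ ⇑φ ≠ ⇑ψ :=
  quotient_continuousMap_not_surjective_general K V W hW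
end

section
/- Let A be a commutative ring, let f ∈ A be a non-zero-divisor, and let M• be a cochain complex of A-modules, indexed by ℤ, such that multiplication by f is injective on each Mⁱ. Then for every i ∈ ℤ, the assignment sending an i-cocycle z of M• to the class of fⁱ·z in H^i(η_f(M•)) is a surjective A-linear map from the module of i-cocycles Zⁱ(M•) onto H^i(η_f(M•)) whose kernel is { z ∈ Zⁱ(M•) : f·z is an i-coboundary of M• }; consequently it induces a canonical isomorphism of A-modules H^i(M•)/H^i(M•)[f] ≅ H^i(η_f(M•)), where H^i(M•)[f] denotes the submodule of f-torsion elements of H^i(M•). -/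
/-!
We formalize the décalage functor `η_f` of Berthelot–Ogus and Bhatt–Morrow–Scholze for an
`f`-torsion-free cochain complex of `A`-modules. A cochain complex of `A`-modules is presented
as an `A`-module `M` together with a differential `d : M →ₗ[A] M` with `d ∘ d = 0` and an
internal grading `G : ℤ → Submodule A M` (so `Mⁱ = G i`) with `d (G i) ⊆ G (i+1)`.
The localization `M[1/f]` is `LocalizedModule (Submonoid.powers f) M`, and
`η_f(M)ⁱ = { α ∈ fⁱ·Mⁱ : dα ∈ f^{i+1}·M^{i+1} } ⊆ M[1/f]`.
-/

universe u

open LocalizedModule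

section Decalage

variable {A : Type u} [CommRing A]

/-- The image of `f` in the localization `A[1/f]`, as a unit. -/
noncomputable def fUnit (f : A) : (Localization (Submonoid.powers f))ˣ :=
  (IsLocalization.map_units (Localization (Submonoid.powers f))
    (⟨f, Submonoid.mem_powers f⟩ : Submonoid.powers f)).unit

variable (f : A) {M : Type u} [AddCommGroup M] [Module A M]

/-- Multiplication by `f ^ j` (for `j : ℤ`) on `M[1/f]`, as an `A`-linear map. -/
noncomputable def fzpow (j : ℤ) :
    LocalizedModule (Submonoid.powers f) M →ₗ[A] LocalizedModule (Submonoid.powers f) M where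
  toFun α := ((fUnit f ^ j : (Localization (Submonoid.powers f))ˣ) :
      Localization (Submonoid.powers f)) • α
  map_add' a b := smul_add _ a b
  map_smul' a α := by
    simp only [RingHom.id_apply]
    rw [← algebraMap_smul (Localization (Submonoid.powers f)) a α,
      ← algebraMap_smul (Localization (Submonoid.powers f)) a
        (((fUnit f ^ j : (Localization (Submonoid.powers f))ˣ) :
          Localization (Submonoid.powers f)) • α),
      smul_smul, smul_smul, mul_comm]

/-- The localization `d[1/f] : M[1/f] → M[1/f]` of the differential `d`. -/
noncomputable def locDiff (d : M →ₗ[A] M) :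
    LocalizedModule (Submonoid.powers f) M →ₗ[A] LocalizedModule (Submonoid.powers f) M :=
  IsLocalizedModule.map (Submonoid.powers f)
    (mkLinearMap (Submonoid.powers f) M) (mkLinearMap (Submonoid.powers f) M) d

variable (d : M →ₗ[A] M) (G : ℤ → Submodule A M)

/-- The degree-`n` term `η_f(M)ⁿ = { α ∈ fⁿ·Mⁿ : dα ∈ f^{n+1}·M^{n+1} }` of the décalage
complex, as a submodule of `M[1/f]`; here `Mⁿ = G n` is the degree-`n` graded piece. -/
noncomputable def etaDeg (n : ℤ) :
    Submodule A (LocalizedModule (Submonoid.powers f) M) :=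
  (G n).map ((fzpow f n).comp (mkLinearMap (Submonoid.powers f) M)) ⊓
    ((G (n + 1)).map ((fzpow f (n + 1)).comp (mkLinearMap (Submonoid.powers f) M))).comap
      (locDiff f d)

/-- Cocycles of `η_f(M)` in degree `n`. -/
noncomputable def etaCocycles (n : ℤ) :
    Submodule A (LocalizedModule (Submonoid.powers f) M) :=
  etaDeg f d G n ⊓ LinearMap.ker (locDiff f d)

/-- Coboundaries of `η_f(M)` in degree `n`. -/
noncomputable def etaBoundaries (n : ℤ) :
    Submodule A (LocalizedModule (Submonoid.powers f) M) :=
  (etaDeg f d G (n - 1)).map (locDiff f d)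

/-- The cohomology `H^n(η_f(M))` of the décalage complex. -/
noncomputable def etaCohomology (n : ℤ) : Type u :=
  ↥(etaCocycles f d G n) ⧸ (etaBoundaries f d G n).comap (etaCocycles f d G n).subtype

noncomputable instance (n : ℤ) : AddCommGroup (etaCohomology f d G n) :=
  inferInstanceAs (AddCommGroup
    (↥(etaCocycles f d G n) ⧸ (etaBoundaries f d G n).comap (etaCocycles f d G n).subtype))

noncomputable instance (n : ℤ) : Module A (etaCohomology f d G n) :=
  inferInstanceAs (Module A
    (↥(etaCocycles f d G n) ⧸ (etaBoundaries f d G n).comap (etaCocycles f d G n).subtype))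

/-- The class in `H^n(η_f(M))` of an `η`-cocycle. -/
noncomputable def etaClass (n : ℤ) (α : ↥(etaCocycles f d G n)) : etaCohomology f d G n :=
  Submodule.Quotient.mk α

/-- Cocycles `Zⁿ(M)` of the original complex. -/
noncomputable def cocycles (n : ℤ) : Submodule A M := G n ⊓ LinearMap.ker d

/-- Coboundaries `Bⁿ(M)` of the original complex. -/
noncomputable def boundaries (n : ℤ) : Submodule A M := (G (n - 1)).map d

/-- Cohomology `Hⁿ(M)` of the original complex. -/
noncomputable def cohomology (n : ℤ) : Type u :=
  ↥(cocycles d G n) ⧸ (boundaries d G n).comap (cocycles d G n).subtype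

noncomputable instance (n : ℤ) : AddCommGroup (cohomology d G n) :=
  inferInstanceAs (AddCommGroup
    (↥(cocycles d G n) ⧸ (boundaries d G n).comap (cocycles d G n).subtype))

noncomputable instance (n : ℤ) : Module A (cohomology d G n) :=
  inferInstanceAs (Module A
    (↥(cocycles d G n) ⧸ (boundaries d G n).comap (cocycles d G n).subtype))

/-- The class in `Hⁿ(M)` of a cocycle. -/
noncomputable def cls (n : ℤ) (z : ↥(cocycles d G n)) : cohomology d G n :=
  Submodule.Quotient.mk z

/-- The `f`-torsion submodule `Hⁿ(M)[f]` of the cohomology. -/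
noncomputable def fTorsion (n : ℤ) : Submodule A (cohomology d G n) :=
  LinearMap.ker (LinearMap.lsmul A (cohomology d G n) f)

end Decalage

/-!
Since `M` is `f`-torsion-free, `M → M[1/f]` is injective, so an element `fⁿ·x` of `η_f(M)ⁿ`
is a cocycle exactly when `x` is one: the η-cocycles are precisely `fⁿ·Zⁿ(M)`. An η-coboundary
`d(f^{n-1}·w)` equals `fⁿ·z` exactly when `d w = f·z`, so `z ↦ [fⁿ·z]` is a surjection
`Zⁿ(M) → Hⁿ(η_f M)` whose kernel is the preimage of `Hⁿ(M)[f]`.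
-/

open Submodule

section EtaCohomology

variable {A : Type u} [CommRing A] (f : A) {M : Type u} [AddCommGroup M] [Module A M]

local notation "ι" => mkLinearMap (Submonoid.powers f) M

lemma mkLinearMap_powers_injective (hf : IsSMulRegular M f) : Function.Injective ι :=
  (IsLocalizedModule.injective_iff_isRegular (Submonoid.powers f) _).mpr
    fun ⟨_, k, hk⟩ => hk ▸ hf.pow k

lemma fzpow_fzpow (j k : ℤ) (α : LocalizedModule (Submonoid.powers f) M) :
    fzpow f j (fzpow f k α) = fzpow f (j + k) α := by
  simp only [fzpow, LinearMap.coe_mk, AddHom.coe_mk, smul_smul, ← Units.val_mul, ← zpow_add]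

lemma fzpow_zero_apply (α : LocalizedModule (Submonoid.powers f) M) : fzpow f 0 α = α := by
  simp [fzpow]

lemma fzpow_injective (j : ℤ) :
    Function.Injective (fzpow f j : LocalizedModule (Submonoid.powers f) M → _) :=
  Function.LeftInverse.injective (g := fzpow f (-j)) fun α => by
    rw [fzpow_fzpow, neg_add_cancel, fzpow_zero_apply]

lemma fzpow_one_apply (α : LocalizedModule (Submonoid.powers f) M) : fzpow f 1 α = f • α := by
  change ((fUnit f ^ (1 : ℤ) : (Localization (Submonoid.powers f))ˣ) :
    Localization (Submonoid.powers f)) • α = f • α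
  rw [zpow_one]
  exact algebraMap_smul _ f α

lemma fzpow_mk_smul (j : ℤ) (x : M) : fzpow f j (ι (f • x)) = fzpow f (j + 1) (ι x) := by
  rw [← fzpow_fzpow, fzpow_one_apply, map_smul]

lemma locDiff_mk (d : M →ₗ[A] M) (x : M) : locDiff f d (ι x) = ι (d x) :=
  IsLocalizedModule.map_apply _ _ _ d x

lemma locDiff_fzpow (d : M →ₗ[A] M) (j : ℤ) (α : LocalizedModule (Submonoid.powers f) M) :
    locDiff f d (fzpow f j α) = fzpow f j (locDiff f d α) :=
  (locDiff f d).map_smul_of_tower _ α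

variable (d : M →ₗ[A] M) (G : ℤ → Submodule A M)

lemma fzpow_mk_mem_etaCocycles {n : ℤ} {z : M} (hz : z ∈ cocycles d G n) :
    fzpow f n (ι z) ∈ etaCocycles f d G n := by
  have hdz : locDiff f d (fzpow f n (ι z)) = 0 := by
    rw [locDiff_fzpow, locDiff_mk, hz.2, map_zero, map_zero]
  refine ⟨⟨⟨z, hz.1, rfl⟩, mem_comap.mpr ?_⟩, hdz⟩
  rw [hdz]
  exact zero_mem _

lemma exists_mem_cocycles_of_mem_etaCocycles (hf : IsSMulRegular M f) {n : ℤ}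
    {α : LocalizedModule (Submonoid.powers f) M} (hα : α ∈ etaCocycles f d G n) :
    ∃ z ∈ cocycles d G n, fzpow f n (ι z) = α := by
  obtain ⟨⟨⟨z, hzG, rfl⟩, -⟩, hdα⟩ := hα
  refine ⟨z, ⟨hzG, ?_⟩, rfl⟩
  apply mkLinearMap_powers_injective f hf
  apply fzpow_injective f n
  rw [← locDiff_mk, ← locDiff_fzpow, map_zero, map_zero]
  exact hdα

lemma fzpow_mk_mem_etaBoundaries {n : ℤ} {z w : M} (hz : z ∈ G n) (hw : w ∈ G (n - 1))
    (hdw : d w = f • z) : fzpow f n (ι z) ∈ etaBoundaries f d G n := by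
  have hd : locDiff f d (fzpow f (n - 1) (ι w)) = fzpow f n (ι z) := by
    rw [locDiff_fzpow, locDiff_mk, hdw, fzpow_mk_smul, sub_add_cancel]
  refine ⟨_, ⟨⟨w, hw, rfl⟩, mem_comap.mpr ?_⟩, hd⟩
  rw [LinearMap.comp_apply, hd, sub_add_cancel]
  exact ⟨z, hz, rfl⟩

lemma exists_eq_smul_of_fzpow_mk_mem_etaBoundaries (hf : IsSMulRegular M f) {n : ℤ} {z : M}
    (h : fzpow f n (ι z) ∈ etaBoundaries f d G n) : ∃ w ∈ G (n - 1), d w = f • z := by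
  obtain ⟨_, ⟨⟨w, hw, rfl⟩, -⟩, hd⟩ := h
  refine ⟨w, hw, mkLinearMap_powers_injective f hf (fzpow_injective f (n - 1) ?_)⟩
  rw [← locDiff_mk, ← locDiff_fzpow, fzpow_mk_smul, sub_add_cancel]
  exact hd

lemma cls_mem_fTorsion_iff {n : ℤ} (z : cocycles d G n) :
    cls d G n z ∈ fTorsion f d G n ↔ ∃ w ∈ G (n - 1), d w = f • (z : M) := by
  change (Submodule.Quotient.mk (f • z) :
    cocycles d G n ⧸ (boundaries d G n).comap (cocycles d G n).subtype) = 0 ↔ _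
  rw [Submodule.Quotient.mk_eq_zero]
  rfl

noncomputable def cocyclesToEtaCocycles (n : ℤ) : cocycles d G n →ₗ[A] etaCocycles f d G n :=
  (fzpow f n ∘ₗ ι ∘ₗ (cocycles d G n).subtype).codRestrict _
    fun z => fzpow_mk_mem_etaCocycles f d G z.2

noncomputable def cocyclesToEtaCohomology (n : ℤ) : cocycles d G n →ₗ[A] etaCohomology f d G n :=
  ((etaBoundaries f d G n).comap (etaCocycles f d G n).subtype).mkQ ∘ₗ
    cocyclesToEtaCocycles f d G n

lemma cocyclesToEtaCohomology_surjective (hf : IsSMulRegular M f) (n : ℤ) :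
    Function.Surjective (cocyclesToEtaCohomology f d G n) := by
  rintro ⟨α, hα⟩
  obtain ⟨z, hz, rfl⟩ := exists_mem_cocycles_of_mem_etaCocycles f d G hf hα
  exact ⟨⟨z, hz⟩, rfl⟩

lemma cocyclesToEtaCohomology_eq_zero_iff (hf : IsSMulRegular M f) {n : ℤ}
    (z : cocycles d G n) :
    cocyclesToEtaCohomology f d G n z = 0 ↔ ∃ w ∈ G (n - 1), d w = f • (z : M) :=
  (Submodule.Quotient.mk_eq_zero _).trans
    ⟨exists_eq_smul_of_fzpow_mk_mem_etaBoundaries f d G hf,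
      fun ⟨_, hw, hdw⟩ => fzpow_mk_mem_etaBoundaries f d G z.2.1 hw hdw⟩

noncomputable def cohomologyToEtaCohomology (n : ℤ) :
    cohomology d G n →ₗ[A] etaCohomology f d G n :=
  liftQ _ (cocyclesToEtaCohomology f d G n) fun z ⟨w, hw, hdw⟩ =>
    (Submodule.Quotient.mk_eq_zero _).mpr <| fzpow_mk_mem_etaBoundaries f d G z.2.1
      (smul_mem _ f hw) (by rw [map_smul, hdw])

lemma cohomologyToEtaCohomology_surjective (hf : IsSMulRegular M f) (n : ℤ) :
    Function.Surjective (cohomologyToEtaCohomology f d G n) :=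
  fun y =>
    let ⟨z, hz⟩ := cocyclesToEtaCohomology_surjective f d G hf n y
    ⟨cls d G n z, hz⟩

lemma ker_cohomologyToEtaCohomology (hf : IsSMulRegular M f) (n : ℤ) :
    LinearMap.ker (cohomologyToEtaCohomology f d G n) = fTorsion f d G n := by
  ext x
  induction x using Submodule.Quotient.induction_on with
  | H z =>
    exact (cocyclesToEtaCohomology_eq_zero_iff f d G hf z).trans
      (cls_mem_fTorsion_iff f d G z).symm

end EtaCohomology

theorem eta_cohomology_iso_general
    {A : Type u} [CommRing A] (f : A)
    {M : Type u} [AddCommGroup M] [Module A M]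
    (d : M →ₗ[A] M) (G : ℤ → Submodule A M)
    (htf : ∀ x : M, f • x = 0 → x = 0)
    (i : ℤ) :
    ∃ hmem : ∀ z : ↥(cocycles d G i),
        fzpow f i (mkLinearMap (Submonoid.powers f) M (z : M)) ∈ etaCocycles f d G i,
      Function.Surjective
        (fun z : ↥(cocycles d G i) => etaClass f d G i ⟨_, hmem z⟩) ∧
      (∀ z : ↥(cocycles d G i),
        etaClass f d G i ⟨_, hmem z⟩ = 0 ↔ ∃ w ∈ G (i - 1), d w = f • (z : M)) ∧
      ∃ e : (cohomology d G i ⧸ fTorsion f d G i) ≃ₗ[A] etaCohomology f d G i,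
        ∀ z : ↥(cocycles d G i),
          e (Submodule.Quotient.mk (cls d G i z)) = etaClass f d G i ⟨_, hmem z⟩ := by
  have hf : IsSMulRegular M f := .of_right_eq_zero_of_smul htf
  refine ⟨fun z => fzpow_mk_mem_etaCocycles f d G z.2,
    cocyclesToEtaCohomology_surjective f d G hf i,
    cocyclesToEtaCohomology_eq_zero_iff f d G hf,
    (quotEquivOfEq _ _ (ker_cohomologyToEtaCohomology f d G hf i).symm).trans
      ((cohomologyToEtaCohomology f d G i).quotKerEquivOfSurjective
        (cohomologyToEtaCohomology_surjective f d G hf i)),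
    fun _ => rfl⟩

/-- **Bhatt–Morrow–Scholze, décalage and cohomology.** Let `A` be a commutative ring, `f ∈ A`
a non-zero-divisor, and `M•` an `f`-torsion-free cochain complex of `A`-modules (presented as a
graded module `(M, G)` with differential `d`). For every degree `i`, the assignment sending an
`i`-cocycle `z` to the class of `fⁱ·z` in `H^i(η_f(M•))` is well defined, surjective, and its
kernel consists of those cocycles `z` such that `f·z` is an `i`-coboundary; consequently it
induces an isomorphism `Hⁱ(M•)/Hⁱ(M•)[f] ≅ Hⁱ(η_f(M•))`. -/
theorem eta_cohomology_iso
    {A : Type u} [CommRing A] (f : A) (hf : ∀ a : A, f * a = 0 → a = 0)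
    {M : Type u} [AddCommGroup M] [Module A M]
    (d : M →ₗ[A] M) (G : ℤ → Submodule A M)
    (hG : DirectSum.IsInternal G)
    (hdG : ∀ n : ℤ, (G n).map d ≤ G (n + 1))
    (hdd : d.comp d = 0)
    (htf : ∀ x : M, f • x = 0 → x = 0)
    (i : ℤ) :
    ∃ hmem : ∀ z : ↥(cocycles d G i),
        fzpow f i (mkLinearMap (Submonoid.powers f) M (z : M)) ∈ etaCocycles f d G i,
      Function.Surjective
        (fun z : ↥(cocycles d G i) => etaClass f d G i ⟨_, hmem z⟩) ∧
      (∀ z : ↥(cocycles d G i),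
        etaClass f d G i ⟨_, hmem z⟩ = 0 ↔ ∃ w ∈ G (i - 1), d w = f • (z : M)) ∧
      ∃ e : (cohomology d G i ⧸ fTorsion f d G i) ≃ₗ[A] etaCohomology f d G i,
        ∀ z : ↥(cocycles d G i),
          e (Submodule.Quotient.mk (cls d G i z)) = etaClass f d G i ⟨_, hmem z⟩ :=
  eta_cohomology_iso_general f d G htf i
end

section
/- Let O be a discrete valuation ring with uniformizer ϖ and fraction field K, let N ≥ 1, and let ℓ₀, …, ℓ_j ∈ O^N. Let k ≥ 0 be an integer. Then the K-linear span of ℓ₀, …, ℓ_j inside K^N has dimension at most k if and only if, for every n ≥ 1, the (O/ϖⁿO)-submodule of (O/ϖⁿO)^N generated by the reductions of ℓ₀, …, ℓ_j modulo ϖⁿ can be generated by at most k elements. -/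
/-!
Over the principal ideal domain `O`, the `O`-span of the vectors `ℓ t` is free of rank at most the
dimension `r` of their `K`-span, so it is generated by `r` vectors, and so is its reduction
modulo `ϖⁿ`. Conversely, if the `K`-span has dimension `> k`, some `(k + 1) × (k + 1)` minor `d`
of the matrix `(ℓ t s)` is nonzero. If the reduction modulo `ϖⁿ` is generated by `k` vectors, the
reduced minor factors through `(O/ϖⁿ)ᵏ` and vanishes, so `d ∈ ⋂ₙ (ϖⁿ) = 0` by Krull's
intersection theorem.
-/

open Submodule Set

theorem exists_linearIndependent_comp_of_le_finrank_span {K V ι : Type*} [Field K]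
    [AddCommGroup V] [Module K V] [Finite ι] (w : ι → V) {k : ℕ}
    (hk : k ≤ Module.finrank K (span K (range w))) :
    ∃ c : Fin k → ι, LinearIndependent K (w ∘ c) := by
  obtain ⟨κ, a, ha, hspan, hli⟩ := exists_linearIndependent' K w
  have := Finite.of_injective a ha
  have := Fintype.ofFinite κ
  rw [← hspan, finrank_span_eq_card hli] at hk
  obtain ⟨f⟩ : Nonempty (Fin k ↪ κ) := Function.Embedding.nonempty_of_card_le (by simpa using hk)
  exact ⟨a ∘ f, hli.comp f f.injective⟩

namespace Matrix

section CommRing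

variable {R n ι : Type*} [CommRing R] [Fintype n] [DecidableEq n] [Fintype ι]

theorem det_mul_eq_zero_of_card_lt (C : Matrix n ι R) (V : Matrix ι n R)
    (h : Fintype.card ι < Fintype.card n) : (C * V).det = 0 := by
  -- pad `C` with zero columns and `V` with zero rows to make both square
  let e : n ≃ ι ⊕ Fin (Fintype.card n - Fintype.card ι) :=
    Fintype.equivOfCardEq (by simp only [Fintype.card_sum, Fintype.card_fin]; omega)
  have hCV : C * V = (fromCols C 0).submatrix id e * (fromRows V 0).submatrix e id := by
    rw [submatrix_mul_equiv, fromCols_mul_fromRows, Matrix.zero_mul, add_zero, submatrix_id_id]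
  rw [hCV, det_mul]
  refine mul_eq_zero_of_left (det_eq_zero_of_column_eq_zero (e.symm (.inr ⟨0, by omega⟩)) ?_) _
  simp

theorem det_eq_zero_of_rows_mem_span (M : Matrix n n R) (v : ι → n → R)
    (hM : ∀ i, M i ∈ span R (range v)) (h : Fintype.card ι < Fintype.card n) : M.det = 0 := by
  choose C hC using fun i => (mem_span_range_iff_exists_fun R).1 (hM i)
  have hCV : M = of C * of v := by
    ext i l
    simp [← hC i, mul_apply, Finset.sum_apply, mul_comm]
  rw [hCV]
  exact det_mul_eq_zero_of_card_lt _ _ h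

theorem det_submatrix_eq_zero_of_rows_mem_span {m σ : Type*} (A : Matrix m σ R) (v : ι → σ → R)
    (hA : ∀ i, A i ∈ span R (range v)) (h : Fintype.card ι < Fintype.card n)
    (r : n → m) (c : n → σ) : (A.submatrix r c).det = 0 := by
  refine det_eq_zero_of_rows_mem_span _ (fun i => v i ∘ c) (fun i => ?_) h
  have := mem_map_of_mem (f := LinearMap.funLeft R R c) (hA (r i))
  rwa [map_span, ← range_comp] at this

end CommRing

section Field

variable {K σ : Type*} [Field K] [Fintype σ]

theorem exists_det_submatrix_ne_zero_of_linearIndependent {m : ℕ}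
    (A : Matrix (Fin m) σ K) (hA : LinearIndependent K A.row) :
    ∃ e : Fin m → σ, (A.submatrix id e).det ≠ 0 := by
  have hcols : m ≤ Module.finrank K (span K (range A.col)) := by
    rw [← A.rank_eq_finrank_span_cols, hA.rank_matrix, Fintype.card_fin]
  obtain ⟨e, he⟩ := exists_linearIndependent_comp_of_le_finrank_span A.col hcols
  exact ⟨e, ((isUnit_iff_isUnit_det _).1 (linearIndependent_cols_iff_isUnit.1 he)).ne_zero⟩

theorem exists_det_submatrix_ne_zero_of_lt_finrank_span {ι : Type*} [Finite ι]
    (A : Matrix ι σ K) {k : ℕ} (hk : k < Module.finrank K (span K (range A.row))) :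
    ∃ (r : Fin (k + 1) → ι) (c : Fin (k + 1) → σ), (A.submatrix r c).det ≠ 0 := by
  obtain ⟨r, hr⟩ := exists_linearIndependent_comp_of_le_finrank_span A.row hk
  obtain ⟨c, hc⟩ := (A.submatrix r id).exists_det_submatrix_ne_zero_of_linearIndependent hr
  exact ⟨r, c, hc⟩

end Field

end Matrix

theorem span_range_comp_eq_of_span_range_eq {R A M L ι κ : Type*} [CommSemiring R] [Semiring A]
    [Algebra R A] [AddCommMonoid M] [Module R M] [AddCommMonoid L] [Module R L] [Module A L]
    [IsScalarTower R A L] (f : M →ₗ[R] L) {u : κ → M} {v : ι → M}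
    (h : span R (range u) = span R (range v)) :
    span A (range (f ∘ u)) = span A (range (f ∘ v)) := by
  rw [← span_span_of_tower R, range_comp, span_image, h, ← span_image, ← range_comp,
    span_span_of_tower]

theorem exists_fin_span_range_eq_of_le {R M : Type*} [Semiring R] [AddCommMonoid M] [Module R M]
    {r k : ℕ} (u : Fin r → M) (h : r ≤ k) :
    ∃ u' : Fin k → M, span R (range u') = span R (range u) := by
  refine ⟨fun i => if hi : (i : ℕ) < r then u ⟨i, hi⟩ else 0, le_antisymm ?_ ?_⟩
  · rw [span_le]
    rintro _ ⟨i, rfl⟩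
    dsimp only
    split_ifs
    · exact subset_span ⟨_, rfl⟩
    · exact zero_mem _
  · rw [span_le]
    rintro _ ⟨i, rfl⟩
    exact subset_span ⟨Fin.castLE h i, by simp⟩

section FractionRing

variable {O K σ ι : Type*} [CommRing O] [Field K] [Algebra O K] [IsFractionRing O K]

theorem card_le_finrank_span_algebraMap_of_linearIndependent [Finite σ] {r : ℕ}
    {u : Fin r → σ → O} (hu : LinearIndependent O u) {ℓ : ι → σ → O}
    (huℓ : ∀ i, u i ∈ span O (range ℓ)) :
    r ≤ Module.finrank K (span K (range fun t s => algebraMap O K (ℓ t s))) := by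
  let g := LinearMap.compLeft (Algebra.linearMap O K) σ
  have hg : Function.Injective g := fun x y hxy =>
    funext fun s => IsFractionRing.injective O K (congrFun hxy s)
  have hli : LinearIndependent K (g ∘ u) :=
    (hu.map' g (LinearMap.ker_eq_bot.2 hg)).localization (S := nonZeroDivisors O) (Rₛ := K)
  have hle : span K (range (g ∘ u)) ≤ span K (range (g ∘ ℓ)) := by
    rw [span_le]
    rintro _ ⟨i, rfl⟩
    have := mem_map_of_mem (f := g) (huℓ i)
    rw [map_span, ← range_comp] at this
    exact span_le_restrictScalars O K _ this
  calc r = Module.finrank K (span K (range (g ∘ u))) := by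
        rw [finrank_span_eq_card hli, Fintype.card_fin]
    _ ≤ _ := Submodule.finrank_mono hle

theorem exists_fin_span_eq_of_finrank_span_le [IsDomain O] [IsPrincipalIdealRing O] [Finite σ]
    (ℓ : ι → σ → O) {k : ℕ}
    (hk : Module.finrank K (span K (range fun t s => algebraMap O K (ℓ t s))) ≤ k) :
    ∃ u : Fin k → σ → O, span O (range u) = span O (range ℓ) := by
  obtain ⟨r, b⟩ := (span O (range ℓ)).basisOfPid (Pi.basisFun O σ)
  have hspan : span O (range (Subtype.val ∘ b)) = span O (range ℓ) := by
    rw [range_comp, ← coe_subtype, span_image, b.span_eq, Submodule.map_top, range_subtype]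
  have hr : r ≤ k := le_trans (card_le_finrank_span_algebraMap_of_linearIndependent
    (b.linearIndependent.map' _ (ker_subtype _)) fun i => (b i).2) hk
  exact hspan ▸ exists_fin_span_range_eq_of_le _ hr

end FractionRing

theorem eq_zero_of_forall_mem_span_pow {R : Type*} [CommRing R] [IsDomain R] [IsNoetherianRing R]
    {ϖ x : R} (hϖ : ¬IsUnit ϖ) (hx : ∀ n, 1 ≤ n → x ∈ Ideal.span {ϖ ^ n}) : x = 0 := by
  have : x ∈ ⨅ n : ℕ, Ideal.span {ϖ} ^ n := by
    refine mem_iInf _ |>.2 fun n => ?_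
    rcases n.eq_zero_or_pos with rfl | hn
    · simp
    · rw [Ideal.span_singleton_pow]
      exact hx n hn
  rwa [Ideal.iInf_pow_eq_bot_of_isDomain _ (by rwa [Ne, Ideal.span_singleton_eq_top]),
    Ideal.mem_bot] at this

theorem span_rank_le_iff_reductions_generated_general
    (O : Type*) [CommRing O] [IsDomain O] [IsDiscreteValuationRing O]
    (ϖ : O) (hϖ : Irreducible ϖ)
    (N : ℕ) (j : ℕ) (ℓ : Fin (j + 1) → Fin N → O) (k : ℕ) :
    Module.finrank (FractionRing O)
        ↥(Submodule.span (FractionRing O)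
          (Set.range fun t : Fin (j + 1) =>
            fun s : Fin N => algebraMap O (FractionRing O) (ℓ t s))) ≤ k ↔
      ∀ n : ℕ, 1 ≤ n →
        ∃ v : Fin k → (Fin N → O ⧸ Ideal.span {ϖ ^ n}),
          Submodule.span (O ⧸ Ideal.span {ϖ ^ n}) (Set.range v) =
            Submodule.span (O ⧸ Ideal.span {ϖ ^ n})
              (Set.range fun t : Fin (j + 1) =>
                fun s : Fin N => Ideal.Quotient.mk (Ideal.span {ϖ ^ n}) (ℓ t s)) := by
  constructor
  · intro hk n _
    obtain ⟨u, hu⟩ := exists_fin_span_eq_of_finrank_span_le ℓ hk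
    exact ⟨_, span_range_comp_eq_of_span_range_eq
      ((Ideal.Quotient.mkₐ O (Ideal.span {ϖ ^ n})).toLinearMap.compLeft (Fin N)) hu⟩
  · intro hgen
    by_contra! hk
    obtain ⟨r, c, hdet⟩ := Matrix.exists_det_submatrix_ne_zero_of_lt_finrank_span
      ((Matrix.of ℓ).map (algebraMap O (FractionRing O))) hk
    have hdetO : ((Matrix.of ℓ).submatrix r c).det ≠ 0 := fun h0 => hdet (by
      rw [Matrix.submatrix_map, ← RingHom.mapMatrix_apply, ← RingHom.map_det, h0, map_zero])
    refine hdetO (eq_zero_of_forall_mem_span_pow hϖ.not_isUnit fun n hn => ?_)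
    obtain ⟨v, hv⟩ := hgen n hn
    rw [← Ideal.Quotient.eq_zero_iff_mem, RingHom.map_det]
    exact ((Matrix.of ℓ).map (Ideal.Quotient.mk _)).det_submatrix_eq_zero_of_rows_mem_span v
      (fun t => hv ▸ subset_span ⟨t, rfl⟩) (by simp) r c

/-- Let `O` be a discrete valuation ring with uniformizer `ϖ` and fraction field `K`, and let
`ℓ₀, …, ℓⱼ ∈ O^N`. The `K`-linear span of `ℓ₀, …, ℓⱼ` in `K^N` has dimension at most `k` if
and only if, for every `n ≥ 1`, the `(O/ϖⁿ)`-submodule of `(O/ϖⁿ)^N` generated by the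
reductions of `ℓ₀, …, ℓⱼ` modulo `ϖⁿ` can be generated by at most `k` elements. -/
theorem span_rank_le_iff_reductions_generated
    (O : Type*) [CommRing O] [IsDomain O] [IsDiscreteValuationRing O]
    (ϖ : O) (hϖ : Irreducible ϖ)
    (N : ℕ) (hN : 1 ≤ N) (j : ℕ) (ℓ : Fin (j + 1) → Fin N → O) (k : ℕ) :
    Module.finrank (FractionRing O)
        ↥(Submodule.span (FractionRing O)
          (Set.range fun t : Fin (j + 1) =>
            fun s : Fin N => algebraMap O (FractionRing O) (ℓ t s))) ≤ k ↔
      ∀ n : ℕ, 1 ≤ n →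
        ∃ v : Fin k → (Fin N → O ⧸ Ideal.span {ϖ ^ n}),
          Submodule.span (O ⧸ Ideal.span {ϖ ^ n}) (Set.range v) =
            Submodule.span (O ⧸ Ideal.span {ϖ ^ n})
              (Set.range fun t : Fin (j + 1) =>
                fun s : Fin N => Ideal.Quotient.mk (Ideal.span {ϖ ^ n}) (ℓ t s)) :=
  span_rank_le_iff_reductions_generated_general O ϖ hϖ N j ℓ k
end
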